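/- arXiv:2603.29731 — 5 statements merged into one kernel-verified Lean document; each statement's English description precedes it below -/
import Mathlib

section
/- Let Φ be a real-valued C² function and a a C¹ function on (0,∞). Suppose M, C₁, C₂, m > 0 satisfy |Φ'(λ)| ≥ C₁ m and |Φ''(λ)| ≤ C₂ m/λ for all λ in the support of a, and supp a ⊂ [0, m/M]. Then there is C>0 depending only on C₁ and C₂ such that |∫₀^∞ a(λ) e^{iΦ(λ)} dλ| ≤ C M^{-1/2}(‖a‖_∞ + ‖λ∂_λ a‖_∞), provided the right-hand side is finite. -/
/-!
Split the integral at `δ = M^{-1/2}`. On `(0, δ]` the trivial bound gives `A δ`. On `[δ, m/M]`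
integrate by parts, writing `a e^{iΦ} = (g e^{iΦ})' - g' e^{iΦ}` with `g = a / (iΦ')`.
The boundary terms are at most `2A/(C₁ m) ≤ 2A δ / C₁`, because `δ < m/M` forces `m > M^{1/2}`;
the quotient rule together with `|Φ''| ≤ C₂ m/λ` and `λ |a'| ≤ B` gives
`|g'(λ)| ≤ (B/C₁ + A C₂/C₁²)/(m λ)`, so the remaining integral, over an interval of length at
most `m/M`, is `O(δ)`. If `m/M ≤ δ` the trivial bound alone suffices.
-/

open Set MeasureTheory Complex Filter Topology

section Integrals

variable {E : Type*} [NormedAddCommGroup E] [NormedSpace ℝ E] {f : ℝ → E}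

theorem setIntegral_Ioi_eq_setIntegral_Ioc {T : ℝ} (hf : Function.support f ⊆ Iic T) :
    ∫ x in Ioi 0, f x = ∫ x in Ioc 0 T, f x :=
  setIntegral_eq_of_subset_of_forall_sdiff_eq_zero measurableSet_Ioi Ioc_subset_Ioi_self
    fun _ hx => Function.notMem_support.1 fun hfx => hx.2 ⟨hx.1, hf hfx⟩

theorem norm_setIntegral_Ioc_zero_le {A T : ℝ} (hT : 0 ≤ T) (hf : ∀ x ∈ Ioc 0 T, ‖f x‖ ≤ A) :
    ‖∫ x in Ioc 0 T, f x‖ ≤ A * T := by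
  have := norm_setIntegral_le_of_norm_le_const (μ := volume) measure_Ioc_lt_top hf
  rwa [Real.volume_real_Ioc_of_le hT, sub_zero] at this

theorem setIntegral_Ioi_eq_setIntegral_Ioc_add_intervalIntegral {δ R : ℝ} (hδ : 0 ≤ δ)
    (hδR : δ ≤ R) (hf : Function.support f ⊆ Iic R) (h₁ : IntegrableOn f (Ioc 0 δ))
    (h₂ : IntervalIntegrable f volume δ R) :
    ∫ x in Ioi 0, f x = (∫ x in Ioc 0 δ, f x) + ∫ x in δ..R, f x := by
  rw [setIntegral_Ioi_eq_setIntegral_Ioc hf,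
    ← intervalIntegral.integral_of_le (hδ.trans hδR), ← intervalIntegral.integral_of_le hδ]
  exact (intervalIntegral.integral_add_adjacent_intervals
    ((intervalIntegrable_iff_integrableOn_Ioc_of_le hδ).2 h₁) h₂).symm

end Integrals

theorem le_of_mem_tsupport {X Y : Type*} [TopologicalSpace X] [Zero Y] {f : X → Y} {h : X → ℝ}
    {U : Set X} {c : ℝ} {x : X} (hU : U ∈ 𝓝 x) (hh : ContinuousAt h x) (hx : x ∈ tsupport f)
    (hle : ∀ y ∈ Function.support f, y ∈ U → c ≤ h y) : c ≤ h x :=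
  isClosed_Ici.mem_of_frequently_of_tendsto
    ((mem_closure_iff_frequently.1 hx).and_eventually hU |>.mono fun y hy => hle y hy.1 hy.2)
    hh.tendsto

theorem norm_deriv_div_le {𝕜 𝕜' : Type*} [NontriviallyNormedField 𝕜] [NontriviallyNormedField 𝕜']
    [NormedAlgebra 𝕜 𝕜'] {a u : 𝕜 → 𝕜'} {x : 𝕜} {α β c : ℝ} (ha : DifferentiableAt 𝕜 a x)
    (hu : DifferentiableAt 𝕜 u x) (hc : 0 < c) (hux : c ≤ ‖u x‖) (hα : ‖deriv a x‖ ≤ α)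
    (hβ : ‖a x‖ * ‖deriv u x‖ ≤ β) :
    ‖deriv (fun y => a y / u y) x‖ ≤ α / c + β / c ^ 2 := by
  have hu0 : 0 < ‖u x‖ := hc.trans_le hux
  rw [show (fun y => a y / u y) = a / u from rfl, deriv_div ha hu (norm_pos_iff.1 hu0)]
  calc ‖(deriv a x * u x - a x * deriv u x) / u x ^ 2‖
      ≤ (‖deriv a x‖ * ‖u x‖ + ‖a x‖ * ‖deriv u x‖) / ‖u x‖ ^ 2 := by
        rw [norm_div, norm_pow, ← norm_mul, ← norm_mul]
        gcongr
        exact norm_sub_le _ _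
    _ = ‖deriv a x‖ / ‖u x‖ + ‖a x‖ * ‖deriv u x‖ / ‖u x‖ ^ 2 := by
        field_simp
    _ ≤ α / c + β / c ^ 2 := by
        gcongr
        · exact (norm_nonneg _).trans hα
        · exact (mul_nonneg (norm_nonneg _) (norm_nonneg _)).trans hβ

theorem norm_intervalIntegral_mul_cexp_le {a g : ℝ → ℂ} {Φ Φ' : ℝ → ℝ} {δ R G L : ℝ}
    (hδR : δ ≤ R) (ha : ContinuousOn a (Icc δ R)) (hΦ : ∀ x ∈ Icc δ R, HasDerivAt Φ (Φ' x) x)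
    (hg : ∀ x ∈ Icc δ R, DifferentiableAt ℝ g x) (hga : ∀ x ∈ Icc δ R, g x * (I * Φ' x) = a x)
    (hgδ : ‖g δ‖ ≤ G) (hgR : ‖g R‖ ≤ G) (hg' : ∀ x ∈ Icc δ R, ‖deriv g x‖ ≤ L) :
    ‖∫ x in δ..R, a x * exp (I * Φ x)‖ ≤ 2 * G + L * (R - δ) := by
  set e : ℝ → ℂ := fun x => exp (I * Φ x)
  have he_norm (x : ℝ) : ‖e x‖ = 1 := norm_exp_I_mul_ofReal _
  have he : ∀ x ∈ Icc δ R, HasDerivAt e (e x * (I * Φ' x)) x := fun x hx =>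
    ((hΦ x hx).ofReal_comp.const_mul I).cexp
  have he_cont : ContinuousOn e (Icc δ R) := fun x hx => (he x hx).continuousAt.continuousWithinAt
  rw [← uIcc_of_le hδR] at ha he_cont
  have hge : ∀ x ∈ uIcc δ R,
      HasDerivAt (fun y => g y * e y) (deriv g x * e x + a x * e x) x := by
    intro x hx
    rw [uIcc_of_le hδR] at hx
    refine ((hg x hx).hasDerivAt.mul (he x hx)).congr_deriv ?_
    rw [← hga x hx]
    ring
  have hg'e : IntervalIntegrable (fun x => deriv g x * e x) volume δ R := by
    rw [intervalIntegrable_iff_integrableOn_Icc_of_le hδR]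
    refine IntegrableOn.of_bound (by simp) ((measurable_deriv g).aestronglyMeasurable.mul
      ((he_cont.mono (uIcc_of_le hδR).ge).aestronglyMeasurable measurableSet_Icc)) L ?_
    filter_upwards [ae_restrict_mem measurableSet_Icc] with x hx
    simpa [he_norm] using hg' x hx
  have hae : IntervalIntegrable (fun x => a x * e x) volume δ R :=
    (ha.mul he_cont).intervalIntegrable
  have hibp : ∫ x in δ..R, a x * e x = g R * e R - g δ * e δ - ∫ x in δ..R, deriv g x * e x := by
    rw [← intervalIntegral.integral_eq_sub_of_hasDerivAt hge (hg'e.add hae),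
      intervalIntegral.integral_add hg'e hae]
    ring
  have hrem : ‖∫ x in δ..R, deriv g x * e x‖ ≤ L * (R - δ) := by
    have := intervalIntegral.norm_integral_le_of_norm_le_const (C := L)
      (f := fun x => deriv g x * e x) fun x hx => by
        simpa [he_norm] using hg' x (Ioc_subset_Icc_self (uIoc_of_le hδR ▸ hx))
    rwa [abs_of_nonneg (sub_nonneg.2 hδR)] at this
  calc ‖∫ x in δ..R, a x * e x‖
      ≤ ‖g R * e R‖ + ‖g δ * e δ‖ + ‖∫ x in δ..R, deriv g x * e x‖ := by
        rw [hibp]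
        exact (norm_sub_le _ _).trans (add_le_add_left (norm_sub_le _ _) _)
    _ ≤ G + G + L * (R - δ) := by
        simp only [norm_mul, he_norm, mul_one]
        gcongr
    _ = 2 * G + L * (R - δ) := by ring

noncomputable def phaseQuotient (a : ℝ → ℂ) (Φ : ℝ → ℝ) : ℝ → ℂ :=
  fun x => a x / (I * deriv Φ x)

section PhaseQuotient

variable {Φ : ℝ → ℝ} {a : ℝ → ℂ} {A B c D x : ℝ}

theorem norm_I_mul_ofReal (r : ℝ) : ‖I * (r : ℂ)‖ = |r| := by
  simp

theorem phaseQuotient_mul (hc : 0 < c) (hΦ' : a x ≠ 0 → c ≤ |deriv Φ x|) :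
    phaseQuotient a Φ x * (I * deriv Φ x) = a x := by
  by_cases hax : a x = 0
  · simp [phaseQuotient, hax]
  · refine div_mul_cancel₀ _ ?_
    rw [← norm_ne_zero_iff, norm_I_mul_ofReal]
    exact (hc.trans_le (hΦ' hax)).ne'

theorem norm_phaseQuotient_le (hc : 0 < c) (hΦ' : a x ≠ 0 → c ≤ |deriv Φ x|)
    (hA : ‖a x‖ ≤ A) : ‖phaseQuotient a Φ x‖ ≤ A / c := by
  by_cases hax : a x = 0
  · simpa [phaseQuotient, hax] using div_nonneg ((norm_nonneg _).trans hA) hc.le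
  · rw [phaseQuotient, norm_div, norm_I_mul_ofReal]
    exact div_le_div₀ ((norm_nonneg _).trans hA) hA hc (hΦ' hax)

/- The lower bound on `|Φ'|` is assumed only where `a ≠ 0`; its extension to the closure of the
support is what keeps `a / (iΦ')` differentiable at the boundary of the support. -/
theorem le_abs_deriv_of_mem_tsupport (hΦ : ContDiffOn ℝ 2 Φ (Ioi 0))
    (hΦ' : ∀ l ∈ Function.support a, 0 < l → c ≤ |deriv Φ l|) (hx : 0 < x)
    (hxa : x ∈ tsupport a) : c ≤ |deriv Φ x| :=
  le_of_mem_tsupport (h := fun y => |deriv Φ y|) (Ioi_mem_nhds hx)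
    ((hΦ.continuousOn_deriv_of_isOpen isOpen_Ioi (by norm_num)).continuousAt
      (Ioi_mem_nhds hx)).abs hxa hΦ'

theorem phaseQuotient_eventuallyEq_zero (hxa : x ∉ tsupport a) :
    phaseQuotient a Φ =ᶠ[𝓝 x] 0 :=
  (notMem_tsupport_iff_eventuallyEq.1 hxa).mono fun y hy => by simp [phaseQuotient, hy]

theorem hasDerivAt_I_mul_deriv (hΦ : ContDiffOn ℝ 2 Φ (Ioi 0)) (hx : 0 < x) :
    HasDerivAt (fun y => I * ((deriv Φ y : ℝ) : ℂ)) (I * ((deriv (deriv Φ) x : ℝ) : ℂ)) x :=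
  ((((hΦ.deriv_of_isOpen isOpen_Ioi (m := 1) (by norm_num)).differentiableOn
    one_ne_zero).differentiableAt (Ioi_mem_nhds hx)).hasDerivAt.ofReal_comp).const_mul I

theorem differentiableAt_phaseQuotient (hΦ : ContDiffOn ℝ 2 Φ (Ioi 0))
    (ha : ContDiffOn ℝ 1 a (Ioi 0)) (hc : 0 < c)
    (hΦ' : ∀ l ∈ Function.support a, 0 < l → c ≤ |deriv Φ l|) (hx : 0 < x) :
    DifferentiableAt ℝ (phaseQuotient a Φ) x := by
  by_cases hxa : x ∈ tsupport a
  · refine ((ha.differentiableOn one_ne_zero).differentiableAt (Ioi_mem_nhds hx)).div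
      (hasDerivAt_I_mul_deriv hΦ hx).differentiableAt ?_
    rw [← norm_ne_zero_iff, norm_I_mul_ofReal]
    exact (hc.trans_le (le_abs_deriv_of_mem_tsupport hΦ hΦ' hx hxa)).ne'
  · exact (phaseQuotient_eventuallyEq_zero hxa).differentiableAt_iff.2
      (differentiableAt_const _)

theorem norm_deriv_phaseQuotient_le (hΦ : ContDiffOn ℝ 2 Φ (Ioi 0))
    (ha : ContDiffOn ℝ 1 a (Ioi 0)) (hc : 0 < c) (hD : 0 ≤ D)
    (hΦ' : ∀ l ∈ Function.support a, 0 < l → c ≤ |deriv Φ l|)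
    (hΦ'' : ∀ l ∈ Function.support a, 0 < l → |deriv (deriv Φ) l| ≤ D / l)
    (hA : ‖a x‖ ≤ A) (hB : x * ‖deriv a x‖ ≤ B) (hx : 0 < x) :
    ‖deriv (phaseQuotient a Φ) x‖ ≤ (B / c + A * D / c ^ 2) / x := by
  have hA0 : 0 ≤ A := (norm_nonneg _).trans hA
  by_cases hxa : x ∈ tsupport a
  · have hu := hasDerivAt_I_mul_deriv hΦ hx
    refine (norm_deriv_div_le (α := B / x) (β := A * D / x)
      ((ha.differentiableOn one_ne_zero).differentiableAt (Ioi_mem_nhds hx))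
      hu.differentiableAt hc ?_ ?_ ?_).trans_eq (by ring)
    · rw [norm_I_mul_ofReal]
      exact le_abs_deriv_of_mem_tsupport hΦ hΦ' hx hxa
    · rw [le_div_iff₀ hx, mul_comm]
      exact hB
    · rw [hu.deriv, norm_I_mul_ofReal]
      by_cases hax : a x = 0
      · rw [hax, norm_zero, zero_mul]
        positivity
      · rw [mul_div_assoc]
        exact mul_le_mul hA (hΦ'' x hax hx) (abs_nonneg _) hA0
  · have hB0 : 0 ≤ B := (mul_nonneg hx.le (norm_nonneg _)).trans hB
    rw [(phaseQuotient_eventuallyEq_zero hxa).deriv_eq, deriv_zero, Pi.zero_apply, norm_zero]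
    positivity

end PhaseQuotient

theorem nonstationary_phase_bound_le {C₁ C₂ m M A B δ : ℝ} (hC₁ : 0 < C₁) (hC₂ : 0 ≤ C₂)
    (hm : 0 < m) (hA : 0 ≤ A) (hB : 0 ≤ B) (hδ : 0 < δ) (hδM : δ ^ 2 * M = 1) (hδR : δ < m / M) :
    A * δ + 2 * (A / (C₁ * m)) + (B / (C₁ * m) + A * (C₂ * m) / (C₁ * m) ^ 2) / δ * (m / M - δ)
      ≤ (1 + 2 / C₁ + C₂ / C₁ ^ 2) * δ * (A + B) := by
  obtain rfl : M = (δ ^ 2)⁻¹ := eq_inv_of_mul_eq_one_right hδM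
  have hmδ : 1 / m ≤ δ := by
    rw [div_inv_eq_mul] at hδR
    rw [div_le_iff₀ hm]
    nlinarith
  set K := B / C₁ + A * C₂ / C₁ ^ 2
  have hK : 0 ≤ K := by positivity
  calc _ = A * δ + 2 * (A / C₁) * (1 / m) + K * δ - K * (1 / m) := by
        simp only [K]
        field_simp
        ring
    _ ≤ A * δ + 2 * (A / C₁) * δ + K * δ := by
        have : 0 ≤ K * (1 / m) := by positivity
        have : 2 * (A / C₁) * (1 / m) ≤ 2 * (A / C₁) * δ := by gcongr
        linarith
    _ ≤ (1 + 2 / C₁ + C₂ / C₁ ^ 2) * δ * (A + B) := by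
        have : 0 ≤ δ * B * (1 + 1 / C₁ + C₂ / C₁ ^ 2) := by positivity
        have : (1 + 2 / C₁ + C₂ / C₁ ^ 2) * δ * (A + B) - (A * δ + 2 * (A / C₁) * δ + K * δ)
          = δ * B * (1 + 1 / C₁ + C₂ / C₁ ^ 2) := by
          simp only [K]; field_simp; ring
        linarith

theorem norm_setIntegral_Ioi_mul_cexp_le {Φ : ℝ → ℝ} {a : ℝ → ℂ} {A B c D δ R : ℝ}
    (hΦ : ContDiffOn ℝ 2 Φ (Ioi 0)) (ha : ContDiffOn ℝ 1 a (Ioi 0)) (hc : 0 < c) (hD : 0 ≤ D)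
    (hΦ' : ∀ l ∈ Function.support a, 0 < l → c ≤ |deriv Φ l|)
    (hΦ'' : ∀ l ∈ Function.support a, 0 < l → |deriv (deriv Φ) l| ≤ D / l)
    (hA : ∀ l ∈ Ioi (0:ℝ), ‖a l‖ ≤ A) (hB : ∀ l ∈ Ioi (0:ℝ), l * ‖deriv a l‖ ≤ B)
    (hδ : 0 < δ) (hδR : δ ≤ R) (hsupp : Function.support a ⊆ Icc 0 R) :
    ‖∫ l in Ioi (0:ℝ), a l * exp (I * Φ l)‖
      ≤ A * δ + 2 * (A / c) + (B / c + A * D / c ^ 2) / δ * (R - δ) := by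
  set f : ℝ → ℂ := fun l => a l * exp (I * Φ l)
  have hf_norm (l : ℝ) : ‖f l‖ = ‖a l‖ := by simp [f, norm_exp_I_mul_ofReal]
  have hf_cont : ContinuousOn f (Ioi 0) := by
    have := hΦ.continuousOn
    have := ha.continuousOn
    fun_prop
  have hIcc : Icc δ R ⊆ Ioi 0 := fun x hx => hδ.trans_le hx.1
  have hA0 : 0 ≤ A := (norm_nonneg _).trans (hA δ hδ)
  have hB0 : 0 ≤ B := (mul_nonneg hδ.le (norm_nonneg _)).trans (hB δ hδ)
  have hf_int : IntegrableOn f (Ioc 0 δ) :=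
    IntegrableOn.of_bound measure_Ioc_lt_top
      ((hf_cont.mono Ioc_subset_Ioi_self).aestronglyMeasurable measurableSet_Ioc) A <| by
        filter_upwards [ae_restrict_mem measurableSet_Ioc] with x hx
        exact (hf_norm x).trans_le (hA x hx.1)
  rw [setIntegral_Ioi_eq_setIntegral_Ioc_add_intervalIntegral hδ.le hδR
    ((Function.support_mul_subset_left _ _).trans (hsupp.trans Icc_subset_Iic_self)) hf_int
    (hf_cont.mono (uIcc_of_le hδR ▸ hIcc)).intervalIntegrable, add_assoc]
  refine (norm_add_le _ _).trans (add_le_add (norm_setIntegral_Ioc_zero_le hδ.le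
    fun x hx => (hf_norm x).trans_le (hA x hx.1)) ?_)
  refine norm_intervalIntegral_mul_cexp_le hδR (ha.continuousOn.mono hIcc)
    (fun x hx => ((hΦ.differentiableOn (by norm_num)).differentiableAt
      (Ioi_mem_nhds (hIcc hx))).hasDerivAt)
    (fun x hx => differentiableAt_phaseQuotient hΦ ha hc hΦ' (hIcc hx))
    (fun x hx => phaseQuotient_mul hc fun h => hΦ' x h (hIcc hx))
    (norm_phaseQuotient_le hc (fun h => hΦ' δ h hδ) (hA δ hδ))
    (norm_phaseQuotient_le hc (fun h => hΦ' R h (hδ.trans_le hδR)) (hA R (hδ.trans_le hδR)))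
    fun x hx => ?_
  exact (norm_deriv_phaseQuotient_le hΦ ha hc hD hΦ' hΦ'' (hA x (hIcc hx)) (hB x (hIcc hx))
    (hIcc hx)).trans (div_le_div_of_nonneg_left (by positivity) hδ hx.1)

/-- Quantitative (non-)stationary phase, case (i): if `|Φ'| ≥ C₁ m`, `|Φ''| ≤ C₂ m/λ`
on the support of `a` and `supp a ⊆ [0, m/M]`, then
`|∫₀^∞ a e^{iΦ}| ≤ C M^{-1/2} (‖a‖_∞ + ‖λ ∂_λ a‖_∞)` with `C` depending only on `C₁, C₂`. -/
theorem quantitative_stationary_phase_one (C₁ C₂ : ℝ) (hC₁ : 0 < C₁) (hC₂ : 0 < C₂) :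
    ∃ C > (0:ℝ), ∀ (Φ : ℝ → ℝ) (a : ℝ → ℂ),
      ContDiffOn ℝ 2 Φ (Ioi 0) → ContDiffOn ℝ 1 a (Ioi 0) →
      ∀ M m : ℝ, 0 < M → 0 < m →
      (∀ l ∈ Function.support a, 0 < l → C₁ * m ≤ |deriv Φ l|) →
      (∀ l ∈ Function.support a, 0 < l → |deriv (deriv Φ) l| ≤ C₂ * m / l) →
      Function.support a ⊆ Icc 0 (m / M) →
      ∀ A B : ℝ, (∀ l ∈ Ioi (0:ℝ), ‖a l‖ ≤ A) →
        (∀ l ∈ Ioi (0:ℝ), l * ‖deriv a l‖ ≤ B) →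
      ‖∫ l in Ioi (0:ℝ), a l * Complex.exp (Complex.I * (Φ l : ℂ))‖
        ≤ C * M ^ (-(1:ℝ)/2) * (A + B) := by
  refine ⟨1 + 2 / C₁ + C₂ / C₁ ^ 2, by positivity, ?_⟩
  intro Φ a hΦ ha M m hM hm hΦ' hΦ'' hsupp A B hA hB
  have hA0 : 0 ≤ A := (norm_nonneg _).trans (hA 1 (mem_Ioi.2 one_pos))
  have hB0 : 0 ≤ B := (mul_nonneg zero_le_one (norm_nonneg _)).trans (hB 1 (mem_Ioi.2 one_pos))
  set δ := M ^ (-(1:ℝ)/2)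
  have hδ : 0 < δ := by positivity
  have hδM : δ ^ 2 * M = 1 := by
    rw [← Real.rpow_natCast, ← Real.rpow_mul hM.le, ← Real.rpow_add_one hM.ne']
    norm_num
  rcases le_or_gt (m / M) δ with hRδ | hδR
  · rw [setIntegral_Ioi_eq_setIntegral_Ioc (T := δ) ((Function.support_mul_subset_left _ _).trans
      (hsupp.trans (Icc_subset_Iic_self.trans (Iic_subset_Iic.2 hRδ))))]
    calc _ ≤ A * δ := norm_setIntegral_Ioc_zero_le hδ.le fun x hx => by simpa using hA x hx.1
      _ ≤ (1 + 2 / C₁ + C₂ / C₁ ^ 2) * δ * (A + B) := by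
        have : 0 ≤ δ * B + δ * (A + B) * (2 / C₁ + C₂ / C₁ ^ 2) := by positivity
        nlinarith
  · exact (norm_setIntegral_Ioi_mul_cexp_le hΦ ha (mul_pos hC₁ hm) (mul_pos hC₂ hm).le hΦ'
      (fun l hl hl0 => (hΦ'' l hl hl0).trans_eq (by ring)) hA hB hδ hδR.le hsupp).trans
      (nonstationary_phase_bound_le hC₁ hC₂.le hm hA0 hB0 hδ hδM hδR)
end

section
/- Let Φ be a real-valued C² function and a a C¹ function on (0,∞). Suppose M, C₁, C₂, m > 0 satisfy |Φ'(λ)| ≥ C₁ M|λ−m| and |Φ''(λ)| ≤ C₂ M for all λ in the support of a. Then there is C>0 depending only on C₁ and C₂ such that |∫₀^∞ a(λ) e^{iΦ(λ)} dλ| ≤ C M^{-1/2}(‖a‖_∞ + ‖λ∂_λ a‖_∞), provided the right-hand side is finite. -/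
open Set MeasureTheory

/-!
Put `δ = M^{-1/2}`. On `(0, δ]` and on the window `[m - δ, m + δ]` around the stationary point
the integrand is bounded by `A`, which costs `3 A δ`. On an interval `[c, d] ⊆ [δ, ∞)` at
distance `≥ δ` from `m`, one integration by parts, `a e^{iΦ} = (a / iΦ') (e^{iΦ})'`, bounds the
integral by boundary terms `≤ A / (C₁ M δ)` plus `∫ |(a / Φ')'|`, where
`|(a / Φ')'| ≤ |a'| / |Φ'| + |a| |Φ''| / Φ'² ≲ (B x⁻² + (B + A) (x - m)⁻²) / M`
integrates to `≲ (A + B) / (M δ)`. Since `M δ = δ⁻¹`, every piece is `O((A + B) δ)`; the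
unbounded piece `(m + δ, ∞)` is the limit of bounded ones.
-/

open Filter Topology

theorem inv_mul_abs_le_inv_sq_add_inv_sq (x y : ℝ) :
    (|x| * |y|)⁻¹ ≤ (x ^ 2)⁻¹ + (y ^ 2)⁻¹ := by
  rw [mul_inv, ← sq_abs x, ← sq_abs y, ← inv_pow, ← inv_pow]
  have := two_mul_le_add_sq |x|⁻¹ |y|⁻¹
  have : 0 ≤ |x|⁻¹ * |y|⁻¹ := by positivity
  linarith

theorem continuousOn_inv_sq_sub {s : Set ℝ} {m : ℝ} (hm : m ∉ s) :
    ContinuousOn (fun x : ℝ => ((x - m) ^ 2)⁻¹) s :=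
  ((continuous_sub_right m).pow 2).continuousOn.inv₀ fun _ hx =>
    pow_ne_zero 2 (sub_ne_zero.2 fun h => hm (h ▸ hx))

theorem integral_inv_sq_sub {c d m : ℝ} (hcd : c ≤ d) (hm : m ∉ Icc c d) :
    ∫ x in c..d, ((x - m) ^ 2)⁻¹ = (c - m)⁻¹ - (d - m)⁻¹ := by
  rw [← uIcc_of_le hcd] at hm
  have hne : ∀ x ∈ uIcc c d, x - m ≠ 0 := fun x hx => sub_ne_zero.2 fun h => hm (h ▸ hx)
  have hderiv : ∀ x ∈ uIcc c d, HasDerivAt (fun y => -(y - m)⁻¹) ((x - m) ^ 2)⁻¹ x := by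
    intro x hx
    have h := (((hasDerivAt_id x).sub_const m).inv (hne x hx)).neg
    simp only [id, neg_div, neg_neg, one_div] at h
    exact h
  rw [intervalIntegral.integral_eq_sub_of_hasDerivAt hderiv
    (continuousOn_inv_sq_sub hm).intervalIntegrable]
  ring

theorem integral_inv_sq_sub_le {c d m δ : ℝ} (hδ : 0 < δ) (hcd : c ≤ d)
    (hsep : d ≤ m - δ ∨ m + δ ≤ c) :
    ∫ x in c..d, ((x - m) ^ 2)⁻¹ ≤ δ⁻¹ := by
  rcases hsep with hleft | hright
  · rw [integral_inv_sq_sub hcd fun h => by linarith [h.2]]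
    have hc : (c - m)⁻¹ < 0 := inv_lt_zero.2 (by linarith)
    have hd : -(d - m)⁻¹ ≤ δ⁻¹ := by
      rw [← inv_neg, neg_sub]; exact inv_anti₀ hδ (by linarith)
    linarith
  · rw [integral_inv_sq_sub hcd fun h => by linarith [h.1]]
    have hc : (c - m)⁻¹ ≤ δ⁻¹ := inv_anti₀ hδ (by linarith)
    have hd : 0 < (d - m)⁻¹ := inv_pos.2 (by linarith)
    linarith

theorem le_abs_sub_of_mem_Icc {c d m δ x : ℝ} (hsep : d ≤ m - δ ∨ m + δ ≤ c)
    (hx : x ∈ Icc c d) : δ ≤ |x - m| := by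
  rcases hsep with hsep | hsep
  · rw [abs_sub_comm]; exact (le_abs_self _).trans' (by linarith [hx.2])
  · exact (le_abs_self _).trans' (by linarith [hx.1])

theorem integral_inv_sq_add_inv_sq_sub_le {B K c d m δ : ℝ} (hB : 0 ≤ B) (hK : 0 ≤ K)
    (hδ : 0 < δ) (hδc : δ ≤ c) (hcd : c ≤ d) (hsep : d ≤ m - δ ∨ m + δ ≤ c) :
    ∫ x in c..d, (B * (x ^ 2)⁻¹ + K * ((x - m) ^ 2)⁻¹) ≤ (B + K) / δ := by
  have hm : m ∉ Icc c d := fun hm => by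
    have := le_abs_sub_of_mem_Icc hsep hm; rw [sub_self, abs_zero] at this; linarith
  have h0 : (0 : ℝ) ∉ Icc c d := fun h0 => by linarith [h0.1]
  have hi0 := (continuousOn_inv_sq_sub h0).intervalIntegrable_of_Icc (μ := volume) hcd
  have him := (continuousOn_inv_sq_sub hm).intervalIntegrable_of_Icc (μ := volume) hcd
  have hI0 := integral_inv_sq_sub_le (m := 0) hδ hcd (Or.inr (by linarith))
  simp only [sub_zero] at hi0 hI0
  rw [intervalIntegral.integral_add (hi0.const_mul B) (him.const_mul K),
    intervalIntegral.integral_const_mul, intervalIntegral.integral_const_mul, add_div,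
    div_eq_mul_inv, div_eq_mul_inv]
  gcongr
  exact integral_inv_sq_sub_le hδ hcd hsep

theorem le_of_mem_closure_of_le_on_open {X : Type*} [TopologicalSpace X] {s U : Set X}
    {f g : X → ℝ} (hU : IsOpen U) (hf : ContinuousOn f U) (hg : ContinuousOn g U)
    (hle : ∀ y ∈ s, y ∈ U → f y ≤ g y) {x : X} (hxU : x ∈ U) (hx : x ∈ closure s) :
    f x ≤ g x :=
  ContinuousWithinAt.closure_le (hU.inter_closure ⟨hxU, hx⟩)
    ((hf.continuousAt (hU.mem_nhds hxU)).continuousWithinAt)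
    ((hg.continuousAt (hU.mem_nhds hxU)).continuousWithinAt) fun y hy => hle y hy.2 hy.1

theorem norm_integral_Ioi_le_of_forall_intervalIntegral_le {E : Type*} [NormedAddCommGroup E]
    [NormedSpace ℝ E] {f : ℝ → E} {c K : ℝ} (hf : IntegrableOn f (Ioi c))
    (hK : ∀ d, c ≤ d → ‖∫ x in c..d, f x‖ ≤ K) : ‖∫ x in Ioi c, f x‖ ≤ K :=
  le_of_tendsto (intervalIntegral_tendsto_integral_Ioi c hf tendsto_id).norm
    ((eventually_ge_atTop c).mono hK)

theorem norm_intervalIntegral_mul_deriv_le {u u' v v' : ℝ → ℂ} {ρ : ℝ → ℝ} {c d : ℝ}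
    (hcd : c ≤ d) (hu : ∀ x ∈ Icc c d, HasDerivAt u (u' x) x)
    (hv : ∀ x ∈ Icc c d, HasDerivAt v (v' x) x) (hu' : IntervalIntegrable u' volume c d)
    (hv' : IntervalIntegrable v' volume c d) (hv1 : ∀ x ∈ Icc c d, ‖v x‖ ≤ 1)
    (hρ : ∀ x ∈ Icc c d, ‖u' x‖ ≤ ρ x) (hρi : IntervalIntegrable ρ volume c d) :
    ‖∫ x in c..d, u x * v' x‖ ≤ ‖u c‖ + ‖u d‖ + ∫ x in c..d, ρ x := by
  rw [← uIcc_of_le hcd] at hu hv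
  rw [intervalIntegral.integral_mul_deriv_eq_deriv_mul hu hv hu' hv']
  have hbd (x) (hx : x ∈ Icc c d) : ‖u x * v x‖ ≤ ‖u x‖ := by
    simpa using mul_le_mul_of_nonneg_left (hv1 x hx) (norm_nonneg (u x))
  have hrem : ‖∫ x in c..d, u' x * v x‖ ≤ ∫ x in c..d, ρ x := by
    refine intervalIntegral.norm_integral_le_of_norm_le hcd (ae_of_all _ fun x hx => ?_) hρi
    have hx' : x ∈ Icc c d := Ioc_subset_Icc_self hx
    calc ‖u' x * v x‖ ≤ ‖u' x‖ := by
          simpa using mul_le_mul_of_nonneg_left (hv1 x hx') (norm_nonneg (u' x))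
      _ ≤ ρ x := hρ x hx'
  calc _ ≤ ‖u d * v d‖ + ‖u c * v c‖ + ‖∫ x in c..d, u' x * v x‖ :=
        norm_sub_le_of_le (norm_sub_le _ _) le_rfl
    _ ≤ _ := by linarith [hbd d (right_mem_Icc.2 hcd), hbd c (left_mem_Icc.2 hcd)]

theorem norm_intervalIntegral_mul_exp_le {Φ : ℝ → ℝ} {a : ℝ → ℂ} {A u v : ℝ}
    (hA : ∀ l ∈ Ioi (0:ℝ), ‖a l‖ ≤ A) (hu : 0 ≤ u) (hv : 0 ≤ v) :
    ‖∫ x in u..v, a x * Complex.exp (Complex.I * Φ x)‖ ≤ A * |v - u| :=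
  intervalIntegral.norm_integral_le_of_norm_le_const fun x hx => by
    rw [norm_mul, Complex.norm_exp_I_mul_ofReal, mul_one]
    exact hA x ((le_min hu hv).trans_lt hx.1)

structure NondegenerateStationaryPoint (C₁ C₂ M m : ℝ) (Φ : ℝ → ℝ) (a : ℝ → ℂ) : Prop where
  pos_C₁ : 0 < C₁
  nonneg_C₂ : 0 ≤ C₂
  pos_M : 0 < M
  contDiffOn_phase : ContDiffOn ℝ 2 Φ (Ioi 0)
  contDiffOn_amplitude : ContDiffOn ℝ 1 a (Ioi 0)
  abs_deriv_ge : ∀ l ∈ Function.support a, 0 < l → C₁ * M * |l - m| ≤ |deriv Φ l|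
  abs_deriv_deriv_le : ∀ l ∈ Function.support a, 0 < l → |deriv (deriv Φ) l| ≤ C₂ * M

/-- `a e^{iΦ} = ibpAmplitude Φ a · (e^{iΦ})'`. Where `Φ' = 0` the value is the junk `a / 0 = 0`;
away from `m` this happens only where `a` vanishes. -/
noncomputable def ibpAmplitude (Φ : ℝ → ℝ) (a : ℝ → ℂ) (x : ℝ) : ℂ :=
  a x / (Complex.I * ((deriv Φ x : ℝ) : ℂ))

theorem ibpAmplitude_eventuallyEq_zero {Φ : ℝ → ℝ} {a : ℝ → ℂ} {x : ℝ} (hzero : a =ᶠ[𝓝 x] 0) :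
    ibpAmplitude Φ a =ᶠ[𝓝 x] fun _ => 0 :=
  hzero.mono fun y (hy : a y = 0) => show ibpAmplitude Φ a y = 0 by simp [ibpAmplitude, hy]

namespace NondegenerateStationaryPoint

variable {C₁ C₂ M m A B : ℝ} {Φ : ℝ → ℝ} {a : ℝ → ℂ}

theorem contDiffOn_deriv (h : NondegenerateStationaryPoint C₁ C₂ M m Φ a) :
    ContDiffOn ℝ 1 (deriv Φ) (Ioi 0) :=
  h.contDiffOn_phase.deriv_of_isOpen isOpen_Ioi (by norm_num)

theorem mul_abs_sub_pos (h : NondegenerateStationaryPoint C₁ C₂ M m Φ a) {x : ℝ} (hxm : x ≠ m) :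
    0 < C₁ * M * |x - m| :=
  mul_pos (mul_pos h.pos_C₁ h.pos_M) (abs_pos.2 (sub_ne_zero.2 hxm))

theorem I_mul_deriv_ne_zero (h : NondegenerateStationaryPoint C₁ C₂ M m Φ a) {x : ℝ}
    (hxm : x ≠ m) (hlow : C₁ * M * |x - m| ≤ |deriv Φ x|) :
    Complex.I * ((deriv Φ x : ℝ) : ℂ) ≠ 0 := by
  simpa using abs_pos.1 ((h.mul_abs_sub_pos hxm).trans_le hlow)

/-- The bounds on `Φ'` and `Φ''` are only assumed on the support of `a`; by continuity they
persist on its closure, and off the closure `a` vanishes near `x`. -/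
theorem eventuallyEq_zero_or_bounds (h : NondegenerateStationaryPoint C₁ C₂ M m Φ a) {x : ℝ}
    (hx : 0 < x) :
    a =ᶠ[𝓝 x] 0 ∨ (C₁ * M * |x - m| ≤ |deriv Φ x| ∧ |deriv (deriv Φ) x| ≤ C₂ * M) := by
  rw [← notMem_tsupport_iff_eventuallyEq, or_iff_not_imp_left, not_not]
  intro hcl
  have hΦ' := h.contDiffOn_deriv.continuousOn
  have hΦ'' := h.contDiffOn_deriv.continuousOn_deriv_of_isOpen isOpen_Ioi le_rfl
  exact ⟨le_of_mem_closure_of_le_on_open isOpen_Ioi (by fun_prop) hΦ'.abs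
      h.abs_deriv_ge hx hcl,
    le_of_mem_closure_of_le_on_open isOpen_Ioi hΦ''.abs continuousOn_const
      h.abs_deriv_deriv_le hx hcl⟩

theorem hasDerivAt_ibpAmplitude (h : NondegenerateStationaryPoint C₁ C₂ M m Φ a) {x : ℝ}
    (hx : 0 < x) (hden : Complex.I * ((deriv Φ x : ℝ) : ℂ) ≠ 0) :
    HasDerivAt (ibpAmplitude Φ a) (deriv a x / (Complex.I * ((deriv Φ x : ℝ) : ℂ))
      - a x * (Complex.I * ((deriv (deriv Φ) x : ℝ) : ℂ))
        / (Complex.I * ((deriv Φ x : ℝ) : ℂ)) ^ 2) x := by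
  have ha : HasDerivAt a (deriv a x) x :=
    (h.contDiffOn_amplitude.differentiableOn one_ne_zero x hx).differentiableAt
      (Ioi_mem_nhds hx) |>.hasDerivAt
  have hΦ' : HasDerivAt (deriv Φ) (deriv (deriv Φ) x) x :=
    (h.contDiffOn_deriv.differentiableOn one_ne_zero x hx).differentiableAt
      (Ioi_mem_nhds hx) |>.hasDerivAt
  exact (ha.div (hΦ'.ofReal_comp.const_mul Complex.I) hden).congr_deriv
    (by rw [sub_div, sq, mul_div_mul_right _ _ hden])

theorem contDiffAt_ibpAmplitude (h : NondegenerateStationaryPoint C₁ C₂ M m Φ a) {x : ℝ}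
    (hx : 0 < x) (hxm : x ≠ m) : ContDiffAt ℝ 1 (ibpAmplitude Φ a) x := by
  rcases h.eventuallyEq_zero_or_bounds hx with hzero | ⟨hlow, -⟩
  · exact contDiffAt_const.congr_of_eventuallyEq (ibpAmplitude_eventuallyEq_zero hzero)
  have ha := h.contDiffOn_amplitude.contDiffAt (Ioi_mem_nhds hx)
  have hΦ' := h.contDiffOn_deriv.contDiffAt (Ioi_mem_nhds hx)
  have hden : ContDiffAt ℝ 1 (fun y => Complex.I * ((deriv Φ y : ℝ) : ℂ)) x :=
    contDiffAt_const.mul (Complex.ofRealCLM.contDiff.contDiffAt.comp x hΦ')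
  exact ha.mul (hden.inv (h.I_mul_deriv_ne_zero hxm hlow))

theorem ibpAmplitude_mul_I_mul_deriv (h : NondegenerateStationaryPoint C₁ C₂ M m Φ a) {x : ℝ}
    (hx : 0 < x) (hxm : x ≠ m) :
    ibpAmplitude Φ a x * (Complex.I * ((deriv Φ x : ℝ) : ℂ)) = a x := by
  by_cases hax : a x = 0
  · simp [ibpAmplitude, hax]
  · exact div_mul_cancel₀ _ (h.I_mul_deriv_ne_zero hxm (h.abs_deriv_ge x hax hx))

theorem norm_ibpAmplitude_le (h : NondegenerateStationaryPoint C₁ C₂ M m Φ a)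
    (hA : ∀ l ∈ Ioi (0:ℝ), ‖a l‖ ≤ A) {x : ℝ} (hx : 0 < x) (hxm : x ≠ m) :
    ‖ibpAmplitude Φ a x‖ ≤ A / (C₁ * M * |x - m|) := by
  have hA0 : 0 ≤ A := (norm_nonneg _).trans (hA x hx)
  have hpos := h.mul_abs_sub_pos hxm
  by_cases hax : a x = 0
  · simpa [ibpAmplitude, hax] using div_nonneg hA0 hpos.le
  · rw [ibpAmplitude, norm_div, norm_mul, Complex.norm_I, one_mul, Complex.norm_real,
      Real.norm_eq_abs]
    exact div_le_div₀ hA0 (hA x hx) hpos (h.abs_deriv_ge x hax hx)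

theorem norm_deriv_ibpAmplitude_le (h : NondegenerateStationaryPoint C₁ C₂ M m Φ a)
    (hA : ∀ l ∈ Ioi (0:ℝ), ‖a l‖ ≤ A) (hB : ∀ l ∈ Ioi (0:ℝ), l * ‖deriv a l‖ ≤ B) {x : ℝ}
    (hx : 0 < x) (hxm : x ≠ m) :
    ‖deriv (ibpAmplitude Φ a) x‖
      ≤ (B * (x ^ 2)⁻¹ + (B + A * C₂ / C₁) * ((x - m) ^ 2)⁻¹) / (C₁ * M) := by
  have hA0 : 0 ≤ A := (norm_nonneg _).trans (hA x hx)
  have hB0 : 0 ≤ B := (by positivity : 0 ≤ x * ‖deriv a x‖).trans (hB x hx)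
  have := h.pos_C₁; have := h.nonneg_C₂; have := h.pos_M
  rcases h.eventuallyEq_zero_or_bounds hx with hzero | ⟨hlow, hup⟩
  · rw [(ibpAmplitude_eventuallyEq_zero hzero).deriv_eq, deriv_const, norm_zero]
    positivity
  have hQ := h.mul_abs_sub_pos hxm
  have ha' : ‖deriv a x‖ ≤ B / x := by rw [le_div_iff₀ hx, mul_comm]; exact hB x hx
  rw [(h.hasDerivAt_ibpAmplitude hx (h.I_mul_deriv_ne_zero hxm hlow)).deriv]
  calc _ ≤ ‖deriv a x‖ / |deriv Φ x| + ‖a x‖ * |deriv (deriv Φ) x| / |deriv Φ x| ^ 2 := by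
        refine (norm_sub_le _ _).trans_eq ?_
        simp only [norm_div, norm_mul, norm_pow, Complex.norm_I, one_mul, Complex.norm_real,
          Real.norm_eq_abs]
    _ ≤ B / x / (C₁ * M * |x - m|) + A * (C₂ * M) / (C₁ * M * |x - m|) ^ 2 := by
        gcongr
        exact hA x hx
    _ = (B * (|x| * |x - m|)⁻¹ + A * C₂ / C₁ * ((x - m) ^ 2)⁻¹) / (C₁ * M) := by
        rw [abs_of_pos hx, ← sq_abs (x - m)]
        field_simp
    _ ≤ (B * ((x ^ 2)⁻¹ + ((x - m) ^ 2)⁻¹) + A * C₂ / C₁ * ((x - m) ^ 2)⁻¹) / (C₁ * M) := by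
        gcongr
        exact inv_mul_abs_le_inv_sq_add_inv_sq x (x - m)
    _ = _ := by ring

theorem norm_intervalIntegral_le_ibp (h : NondegenerateStationaryPoint C₁ C₂ M m Φ a)
    (hA : ∀ l ∈ Ioi (0:ℝ), ‖a l‖ ≤ A) (hB : ∀ l ∈ Ioi (0:ℝ), l * ‖deriv a l‖ ≤ B) {c d : ℝ}
    (hc : 0 < c) (hcd : c ≤ d) (hm : m ∉ Icc c d) :
    ‖∫ x in c..d, a x * Complex.exp (Complex.I * Φ x)‖
      ≤ ‖ibpAmplitude Φ a c‖ + ‖ibpAmplitude Φ a d‖ + ∫ x in c..d,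
        (B * (x ^ 2)⁻¹ + (B + A * C₂ / C₁) * ((x - m) ^ 2)⁻¹) / (C₁ * M) := by
  have hsub : Icc c d ⊆ Ioi 0 \ {m} := fun x hx => ⟨hc.trans_le hx.1, fun hxm => hm (hxm ▸ hx)⟩
  have hpos : Icc c d ⊆ Ioi 0 := hsub.trans sdiff_subset
  have h0 : (0 : ℝ) ∉ Icc c d := fun h0 => lt_irrefl (0 : ℝ) (hpos h0)
  have hg : ContDiffOn ℝ 1 (ibpAmplitude Φ a) (Ioi 0 \ {m}) := fun x hx =>
    (h.contDiffAt_ibpAmplitude hx.1 hx.2).contDiffWithinAt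
  have hg' : ContinuousOn (deriv (ibpAmplitude Φ a)) (Icc c d) :=
    (hg.continuousOn_deriv_of_isOpen (isOpen_Ioi.sdiff isClosed_singleton) le_rfl).mono hsub
  have hΦ := h.contDiffOn_phase.continuousOn.mono hpos
  have hΦ' := h.contDiffOn_deriv.continuousOn.mono hpos
  have hv' : ContinuousOn (fun x => Complex.exp (Complex.I * Φ x)
      * (Complex.I * ((deriv Φ x : ℝ) : ℂ))) (Icc c d) := by fun_prop
  have hρ : ContinuousOn (fun x : ℝ =>
      (B * (x ^ 2)⁻¹ + (B + A * C₂ / C₁) * ((x - m) ^ 2)⁻¹) / (C₁ * M)) (Icc c d) := by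
    have := continuousOn_inv_sq_sub h0
    have := continuousOn_inv_sq_sub hm
    simp only [sub_zero] at *
    fun_prop
  have hrw : ∫ x in c..d, a x * Complex.exp (Complex.I * Φ x) = ∫ x in c..d, ibpAmplitude Φ a x
      * (Complex.exp (Complex.I * Φ x) * (Complex.I * ((deriv Φ x : ℝ) : ℂ))) := by
    refine intervalIntegral.integral_congr fun x hx => ?_
    rw [uIcc_of_le hcd] at hx
    rw [mul_comm (Complex.exp _), ← mul_assoc,
      h.ibpAmplitude_mul_I_mul_deriv (hsub hx).1 (hsub hx).2]
  rw [hrw]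
  refine norm_intervalIntegral_mul_deriv_le hcd
    (fun x hx => ((h.contDiffAt_ibpAmplitude (hsub hx).1 (hsub hx).2).differentiableAt
      one_ne_zero).hasDerivAt)
    (fun x hx => (((h.contDiffOn_phase.differentiableOn two_ne_zero x (hpos hx)).differentiableAt
      (Ioi_mem_nhds (hpos hx))).hasDerivAt.ofReal_comp.const_mul Complex.I).cexp)
    (hg'.intervalIntegrable_of_Icc hcd) (hv'.intervalIntegrable_of_Icc hcd)
    (fun x _ => (Complex.norm_exp_I_mul_ofReal (Φ x)).le)
    (fun x hx => h.norm_deriv_ibpAmplitude_le hA hB (hsub hx).1 (hsub hx).2)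
    (hρ.intervalIntegrable_of_Icc hcd)

theorem norm_intervalIntegral_le_of_far (h : NondegenerateStationaryPoint C₁ C₂ M m Φ a)
    (hA : ∀ l ∈ Ioi (0:ℝ), ‖a l‖ ≤ A) (hB : ∀ l ∈ Ioi (0:ℝ), l * ‖deriv a l‖ ≤ B)
    {δ c d : ℝ} (hδ : 0 < δ) (hδc : δ ≤ c) (hcd : c ≤ d) (hsep : d ≤ m - δ ∨ m + δ ≤ c) :
    ‖∫ x in c..d, a x * Complex.exp (Complex.I * Φ x)‖
      ≤ (2 * A + 2 * B + A * C₂ / C₁) / (C₁ * M * δ) := by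
  have hc : 0 < c := hδ.trans_le hδc
  have hA0 : 0 ≤ A := (norm_nonneg _).trans (hA c hc)
  have hB0 : 0 ≤ B := (mul_nonneg hc.le (norm_nonneg _)).trans (hB c hc)
  have := h.pos_C₁; have := h.nonneg_C₂; have := h.pos_M
  have hne : ∀ x ∈ Icc c d, x ≠ m := fun x hx hxm => by
    have := le_abs_sub_of_mem_Icc hsep hx; rw [hxm, sub_self, abs_zero] at this; linarith
  have hbdry : ∀ x ∈ Icc c d, ‖ibpAmplitude Φ a x‖ ≤ A / (C₁ * M * δ) := fun x hx =>
    (h.norm_ibpAmplitude_le hA (hc.trans_le hx.1) (hne x hx)).trans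
      (by gcongr; exact le_abs_sub_of_mem_Icc hsep hx)
  calc _ ≤ _ := h.norm_intervalIntegral_le_ibp hA hB hc hcd fun hm => hne m hm rfl
    _ ≤ A / (C₁ * M * δ) + A / (C₁ * M * δ) + (B + (B + A * C₂ / C₁)) / δ / (C₁ * M) := by
        rw [intervalIntegral.integral_div]
        gcongr
        · exact hbdry c (left_mem_Icc.2 hcd)
        · exact hbdry d (right_mem_Icc.2 hcd)
        · exact integral_inv_sq_add_inv_sq_sub_le hB0 (by positivity) hδ hδc hcd hsep
    _ = _ := by field_simp; ring

theorem norm_intervalIntegral_zero_le (h : NondegenerateStationaryPoint C₁ C₂ M m Φ a)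
    (hm : 0 < m) (hA : ∀ l ∈ Ioi (0:ℝ), ‖a l‖ ≤ A) (hB : ∀ l ∈ Ioi (0:ℝ), l * ‖deriv a l‖ ≤ B)
    {δ : ℝ} (hδ : 0 < δ)
    (hf : IntegrableOn (fun x => a x * Complex.exp (Complex.I * Φ x)) (Ioi 0)) :
    ‖∫ x in (0)..(m + δ), a x * Complex.exp (Complex.I * Φ x)‖
      ≤ 3 * A * δ + (2 * A + 2 * B + A * C₂ / C₁) / (C₁ * M * δ) := by
  have hA0 : 0 ≤ A := (norm_nonneg _).trans (hA δ hδ)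
  have hB0 : 0 ≤ B := (mul_nonneg hδ.le (norm_nonneg _)).trans (hB δ hδ)
  have := h.pos_C₁; have := h.nonneg_C₂; have := h.pos_M
  have hfi {u v : ℝ} (hu : 0 ≤ u) (huv : u ≤ v) :
      IntervalIntegrable (fun x => a x * Complex.exp (Complex.I * Φ x)) volume u v :=
    (intervalIntegrable_iff_integrableOn_Ioc_of_le huv).2
      (hf.mono_set fun x hx => hu.trans_lt hx.1)
  -- `[δ, p]` is the part of `[δ, m + δ]` at distance `≥ δ` from `m`, or a point
  set p := max δ (m - δ) with hp
  have hδp : δ ≤ p := le_max_left _ _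
  have hpm : p ≤ m + δ := max_le (by linarith) (by linarith)
  have hp0 : 0 ≤ p := hδ.le.trans hδp
  have hmid : ‖∫ x in δ..p, a x * Complex.exp (Complex.I * Φ x)‖
      ≤ (2 * A + 2 * B + A * C₂ / C₁) / (C₁ * M * δ) := by
    rcases le_total (m - δ) δ with hle | hle
    · rw [hp, max_eq_left hle, intervalIntegral.integral_same, norm_zero]
      positivity
    · rw [hp, max_eq_right hle]
      exact h.norm_intervalIntegral_le_of_far hA hB hδ le_rfl hle (Or.inl le_rfl)
  rw [← intervalIntegral.integral_add_adjacent_intervals (hfi le_rfl hδ.le)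
      (hfi hδ.le (hδp.trans hpm)),
    ← intervalIntegral.integral_add_adjacent_intervals (hfi hδ.le hδp) (hfi hp0 hpm)]
  calc _ ≤ A * |δ - 0| + ((2 * A + 2 * B + A * C₂ / C₁) / (C₁ * M * δ) + A * |m + δ - p|) :=
        (norm_add_le _ _).trans (add_le_add (norm_intervalIntegral_mul_exp_le hA le_rfl hδ.le)
          ((norm_add_le _ _).trans (add_le_add hmid
            (norm_intervalIntegral_mul_exp_le hA hp0 (hp0.trans hpm)))))
    _ ≤ _ := by
        rw [sub_zero, abs_of_pos hδ, abs_of_nonneg (by linarith)]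
        nlinarith [le_max_right δ (m - δ)]

theorem norm_integral_Ioi_le (h : NondegenerateStationaryPoint C₁ C₂ M m Φ a) (hm : 0 < m)
    (hA : ∀ l ∈ Ioi (0:ℝ), ‖a l‖ ≤ A) (hB : ∀ l ∈ Ioi (0:ℝ), l * ‖deriv a l‖ ≤ B)
    {δ : ℝ} (hδ : 0 < δ) :
    ‖∫ x in Ioi 0, a x * Complex.exp (Complex.I * Φ x)‖
      ≤ 3 * A * δ + 2 * ((2 * A + 2 * B + A * C₂ / C₁) / (C₁ * M * δ)) := by
  have hA0 : 0 ≤ A := (norm_nonneg _).trans (hA δ hδ)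
  have hB0 : 0 ≤ B := (mul_nonneg hδ.le (norm_nonneg _)).trans (hB δ hδ)
  have := h.pos_C₁; have := h.nonneg_C₂; have := h.pos_M
  by_cases hf : IntegrableOn (fun x => a x * Complex.exp (Complex.I * Φ x)) (Ioi 0)
  swap
  · rw [integral_undef hf, norm_zero]
    positivity
  have htail : IntegrableOn (fun x => a x * Complex.exp (Complex.I * Φ x)) (Ioi (m + δ)) :=
    hf.mono_set (Ioi_subset_Ioi (by positivity))
  rw [← intervalIntegral.integral_interval_add_Ioi hf htail, two_mul, ← add_assoc]
  exact (norm_add_le _ _).trans (add_le_add (h.norm_intervalIntegral_zero_le hm hA hB hδ hf)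
    (norm_integral_Ioi_le_of_forall_intervalIntegral_le htail fun d hd =>
      h.norm_intervalIntegral_le_of_far hA hB hδ (by linarith) hd (Or.inr le_rfl)))

end NondegenerateStationaryPoint

/-- Quantitative stationary phase, case (ii): if `|Φ'(λ)| ≥ C₁ M |λ - m|` and
`|Φ''| ≤ C₂ M` on the support of `a`, then
`|∫₀^∞ a e^{iΦ}| ≤ C M^{-1/2} (‖a‖_∞ + ‖λ ∂_λ a‖_∞)` with `C` depending only on `C₁, C₂`. -/
theorem quantitative_stationary_phase_two (C₁ C₂ : ℝ) (hC₁ : 0 < C₁) (hC₂ : 0 < C₂) :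
    ∃ C > (0:ℝ), ∀ (Φ : ℝ → ℝ) (a : ℝ → ℂ),
      ContDiffOn ℝ 2 Φ (Ioi 0) → ContDiffOn ℝ 1 a (Ioi 0) →
      ∀ M m : ℝ, 0 < M → 0 < m →
      (∀ l ∈ Function.support a, 0 < l → C₁ * M * |l - m| ≤ |deriv Φ l|) →
      (∀ l ∈ Function.support a, 0 < l → |deriv (deriv Φ) l| ≤ C₂ * M) →
      ∀ A B : ℝ, (∀ l ∈ Ioi (0:ℝ), ‖a l‖ ≤ A) →
        (∀ l ∈ Ioi (0:ℝ), l * ‖deriv a l‖ ≤ B) →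
      ‖∫ l in Ioi (0:ℝ), a l * Complex.exp (Complex.I * (Φ l : ℂ))‖
        ≤ C * M ^ (-(1:ℝ)/2) * (A + B) := by
  refine ⟨3 + 4 / C₁ + 2 * C₂ / C₁ ^ 2, by positivity, ?_⟩
  intro Φ a hΦ ha M m hM hm h1 h2 A B hA hB
  have hB0 : 0 ≤ B := (mul_nonneg zero_le_one (norm_nonneg _)).trans (hB 1 (mem_Ioi.2 one_pos))
  set δ := M ^ (-(1:ℝ)/2) with hδ_def
  have hδ : 0 < δ := Real.rpow_pos_of_pos hM _
  have hMδ : C₁ * M * δ = C₁ / δ := by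
    have : M * (δ * δ) = 1 := by
      rw [hδ_def, ← Real.rpow_add hM]; norm_num [Real.rpow_neg_one, hM.ne']
    field_simp; linear_combination this
  have h : NondegenerateStationaryPoint C₁ C₂ M m Φ a := ⟨hC₁, hC₂.le, hM, hΦ, ha, h1, h2⟩
  refine (h.norm_integral_Ioi_le hm hA hB hδ).trans ?_
  have hgap : (3 + 4 / C₁ + 2 * C₂ / C₁ ^ 2) * δ * (A + B)
      - (3 * A * δ + 2 * ((2 * A + 2 * B + A * C₂ / C₁) / (C₁ / δ)))
      = B * δ * (3 + 2 * C₂ / C₁ ^ 2) := by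
    field_simp
    ring
  have hgap_nonneg : 0 ≤ B * δ * (3 + 2 * C₂ / C₁ ^ 2) := by positivity
  rw [hMδ]
  linarith
end

section
/- Let V : ℝ → ℝ be smooth with |∂_x^α V(x)| ≲ ⟨x⟩^{-μ-α} for all α ∈ ℕ₀ and −V(x) ≳ ⟨x⟩^{-μ}, μ ∈ (0,2). Let x(y,λ) be the inverse of the Liouville transform y(x,λ) = ∫₀^x √(λ²−V(s)) ds. Then for every α ∈ ℕ₀, |∂_λ^α x(y,λ)| ≲ |λ|^{-α}|x(y,λ)| uniformly in y ∈ ℝ and λ ≠ 0. Moreover |∂_λ^α x(y,λ)| ≲ (λ²−V(x(y,λ)))^{-α/2}|x(y,λ)|. -/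
open Set intervalIntegral
namespace LiouvilleAux


noncomputable def DL (f : ℝ × ℝ → ℝ) : ℝ × ℝ → ℝ :=
  fun p => deriv (fun t => f (p.1, t)) p.2

noncomputable def DY (f : ℝ × ℝ → ℝ) : ℝ × ℝ → ℝ :=
  fun p => deriv (fun u => f (u, p.2)) p.1

def Om : Set (ℝ × ℝ) := {p : ℝ × ℝ | p.2 ≠ 0}

lemma isOpen_Om : IsOpen Om := isOpen_compl_singleton.preimage continuous_snd

abbrev Sm (f : ℝ × ℝ → ℝ) : Prop := ContDiffOn ℝ (⊤ : ℕ∞) f Om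

lemma contDiffAt_of {f : ℝ × ℝ → ℝ} (hf : Sm f) {p : ℝ × ℝ} (hp : p ∈ Om) :
    ContDiffAt ℝ (⊤ : ℕ∞) f p := hf.contDiffAt (isOpen_Om.mem_nhds hp)

lemma diffAt_of {f : ℝ × ℝ → ℝ} (hf : Sm f) {p : ℝ × ℝ} (hp : p ∈ Om) :
    DifferentiableAt ℝ f p := (contDiffAt_of hf hp).differentiableAt (by simp)

lemma slice_hasDerivAt_fderiv {f : ℝ × ℝ → ℝ} {p : ℝ × ℝ} (hd : DifferentiableAt ℝ f p) :
    HasDerivAt (fun t => f (p.1, t)) (fderiv ℝ f p (0, 1)) p.2 := by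
  have h1 : HasDerivAt (fun t : ℝ => ((p.1 : ℝ), t)) ((0 : ℝ), (1 : ℝ)) p.2 :=
    (hasDerivAt_const p.2 p.1).prodMk (hasDerivAt_id p.2)
  have h2 : HasFDerivAt f (fderiv ℝ f p) ((p.1, p.2) : ℝ × ℝ) := by
    rw [Prod.mk.eta]; exact hd.hasFDerivAt
  exact h2.comp_hasDerivAt p.2 h1

lemma sliceY_hasDerivAt_fderiv {f : ℝ × ℝ → ℝ} {p : ℝ × ℝ} (hd : DifferentiableAt ℝ f p) :
    HasDerivAt (fun u => f (u, p.2)) (fderiv ℝ f p (1, 0)) p.1 := by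
  have h1 : HasDerivAt (fun u : ℝ => ((u : ℝ), p.2)) ((1 : ℝ), (0 : ℝ)) p.1 :=
    (hasDerivAt_id p.1).prodMk (hasDerivAt_const p.1 p.2)
  have h2 : HasFDerivAt f (fderiv ℝ f p) ((p.1, p.2) : ℝ × ℝ) := by
    rw [Prod.mk.eta]; exact hd.hasFDerivAt
  exact h2.comp_hasDerivAt p.1 h1

lemma DL_eq_fderiv {f : ℝ × ℝ → ℝ} {p : ℝ × ℝ} (hd : DifferentiableAt ℝ f p) :
    DL f p = fderiv ℝ f p (0, 1) := (slice_hasDerivAt_fderiv hd).deriv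

lemma DY_eq_fderiv {f : ℝ × ℝ → ℝ} {p : ℝ × ℝ} (hd : DifferentiableAt ℝ f p) :
    DY f p = fderiv ℝ f p (1, 0) := (sliceY_hasDerivAt_fderiv hd).deriv

lemma slice_hasDerivAt_DL {f : ℝ × ℝ → ℝ} (hf : Sm f) {p : ℝ × ℝ} (hp : p ∈ Om) :
    HasDerivAt (fun t => f (p.1, t)) (DL f p) p.2 := by
  rw [DL_eq_fderiv (diffAt_of hf hp)]
  exact slice_hasDerivAt_fderiv (diffAt_of hf hp)

lemma sliceY_hasDerivAt_DY {f : ℝ × ℝ → ℝ} (hf : Sm f) {p : ℝ × ℝ} (hp : p ∈ Om) :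
    HasDerivAt (fun u => f (u, p.2)) (DY f p) p.1 := by
  rw [DY_eq_fderiv (diffAt_of hf hp)]
  exact sliceY_hasDerivAt_fderiv (diffAt_of hf hp)

lemma Sm.dl {f : ℝ × ℝ → ℝ} (hf : Sm f) : Sm (DL f) := by
  have h1 : ContDiffOn ℝ (⊤ : ℕ∞) (fun p => fderiv ℝ f p) Om :=
    hf.fderiv_of_isOpen isOpen_Om (by simp)
  have h2 : ContDiffOn ℝ (⊤ : ℕ∞) (fun p => fderiv ℝ f p (0, 1)) Om :=
    h1.clm_apply contDiffOn_const
  exact h2.congr fun p hp => DL_eq_fderiv (diffAt_of hf hp)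

lemma Sm.dln {f : ℝ × ℝ → ℝ} (hf : Sm f) (n : ℕ) : Sm (DL^[n] f) := by
  induction n with
  | zero => exact hf
  | succ n ih => rw [Function.iterate_succ_apply']; exact ih.dl

lemma DL_congr {f g : ℝ × ℝ → ℝ} (h : ∀ q ∈ Om, f q = g q) {p : ℝ × ℝ} (hp : p ∈ Om) :
    DL f p = DL g p := by
  apply Filter.EventuallyEq.deriv_eq
  filter_upwards [isOpen_compl_singleton.mem_nhds (hp : p.2 ≠ 0)] with t ht
  exact h (p.1, t) ht

lemma DLn_congr {f g : ℝ × ℝ → ℝ} (h : ∀ q ∈ Om, f q = g q) (n : ℕ) :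
    ∀ p ∈ Om, DL^[n] f p = DL^[n] g p := by
  induction n with
  | zero => exact h
  | succ n ih =>
    intro p hp
    rw [Function.iterate_succ_apply', Function.iterate_succ_apply']
    exact DL_congr ih hp

lemma DLn_zero_slice {f : ℝ × ℝ → ℝ} {y : ℝ} (h : ∀ t : ℝ, t ≠ 0 → f (y, t) = 0) (n : ℕ) :
    ∀ l : ℝ, l ≠ 0 → DL^[n] f (y, l) = 0 := by
  induction n with
  | zero => exact h
  | succ n ih =>
    intro l hl
    rw [Function.iterate_succ_apply']
    show deriv (fun t => DL^[n] f (y, t)) l = 0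
    have he : (fun t => DL^[n] f (y, t)) =ᶠ[nhds l] fun _ => (0 : ℝ) := by
      filter_upwards [isOpen_compl_singleton.mem_nhds (hl : l ∈ ({0}ᶜ : Set ℝ))] with t ht
      exact ih t ht
    rw [he.deriv_eq, deriv_const]

lemma iteratedDeriv_slice {f : ℝ × ℝ → ℝ} (n : ℕ) :
    ∀ (y l : ℝ), l ≠ 0 → iteratedDeriv n (fun t => f (y, t)) l = DL^[n] f (y, l) := by
  induction n with
  | zero => intro y l _; rfl
  | succ n ih =>
    intro y l hl
    rw [iteratedDeriv_succ, Function.iterate_succ_apply']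
    show deriv _ l = deriv (fun t => DL^[n] f (y, t)) l
    apply Filter.EventuallyEq.deriv_eq
    filter_upwards [isOpen_compl_singleton.mem_nhds (hl : l ∈ ({0}ᶜ : Set ℝ))] with t ht
    exact ih y t ht

lemma pascal_sum (a b : ℕ → ℝ) (n : ℕ) :
    ∑ i ∈ Finset.range (n + 1),
      (n.choose i : ℝ) * (a (i + 1) * b (n - i) + a i * b (n + 1 - i))
    = ∑ i ∈ Finset.range (n + 2), ((n + 1).choose i : ℝ) * (a i * b (n + 1 - i)) := by
  have hsplit : ∑ i ∈ Finset.range (n + 1),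
      (n.choose i : ℝ) * (a (i + 1) * b (n - i) + a i * b (n + 1 - i))
      = (∑ i ∈ Finset.range (n + 1), (n.choose i : ℝ) * (a (i + 1) * b (n - i)))
        + ∑ i ∈ Finset.range (n + 1), (n.choose i : ℝ) * (a i * b (n + 1 - i)) := by
    rw [← Finset.sum_add_distrib]; congr 1; ext i; ring
  rw [hsplit]
  rw [Finset.sum_range_succ' (fun i => ((n + 1).choose i : ℝ) * (a i * b (n + 1 - i))) (n + 1)]
  have h1 : ∀ i ∈ Finset.range (n + 1),
      ((n + 1).choose (i + 1) : ℝ) * (a (i + 1) * b (n + 1 - (i + 1)))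
      = (n.choose i : ℝ) * (a (i + 1) * b (n - i)) + (n.choose (i + 1) : ℝ) * (a (i + 1) * b (n - i)) := by
    intro i _
    have : (n + 1).choose (i + 1) = n.choose i + n.choose (i + 1) := Nat.choose_succ_succ n i
    rw [this, Nat.succ_sub_succ]
    push_cast; ring
  rw [Finset.sum_congr rfl h1, Finset.sum_add_distrib]
  have h2 : ∑ i ∈ Finset.range (n + 1), (n.choose i : ℝ) * (a i * b (n + 1 - i))
      = (∑ i ∈ Finset.range n, (n.choose (i + 1) : ℝ) * (a (i + 1) * b (n - i)))
        + (n.choose 0 : ℝ) * (a 0 * b (n + 1)) := by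
    rw [Finset.sum_range_succ' (fun i => (n.choose i : ℝ) * (a i * b (n + 1 - i))) n]
    congr 1
    apply Finset.sum_congr rfl
    intro i _
    rw [Nat.succ_sub_succ]
  have h3 : ∑ i ∈ Finset.range (n + 1), (n.choose (i + 1) : ℝ) * (a (i + 1) * b (n - i))
      = ∑ i ∈ Finset.range n, (n.choose (i + 1) : ℝ) * (a (i + 1) * b (n - i)) := by
    rw [Finset.sum_range_succ, Nat.choose_succ_self]
    simp
  rw [h2, h3]
  simp [Nat.choose_succ_self_right]
  ring

lemma DL_leibniz {f g : ℝ × ℝ → ℝ} (hf : Sm f) (hg : Sm g) (n : ℕ) :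
    ∀ p ∈ Om, DL^[n] (fun q => f q * g q) p
      = ∑ i ∈ Finset.range (n + 1), (n.choose i : ℝ) * (DL^[i] f p * DL^[n - i] g p) := by
  induction n with
  | zero => intro p _; simp
  | succ n ih =>
    intro p hp
    rw [Function.iterate_succ_apply']
    rw [DL_congr ih hp]
    have hterm : ∀ i ∈ Finset.range (n + 1), HasDerivAt
        (fun t => (n.choose i : ℝ) * (DL^[i] f (p.1, t) * DL^[n - i] g (p.1, t)))
        ((n.choose i : ℝ) * (DL^[i + 1] f p * DL^[n - i] g p + DL^[i] f p * DL^[n + 1 - i] g p))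
        p.2 := by
      intro i hi
      have hi' : i ≤ n := Nat.lt_succ_iff.mp (Finset.mem_range.mp hi)
      have h1 := (slice_hasDerivAt_DL (hf.dln i) hp).mul (slice_hasDerivAt_DL (hg.dln (n - i)) hp)
      have e1 : DL (DL^[i] f) p = DL^[i + 1] f p := (Function.iterate_succ_apply' DL i f).symm ▸ rfl
      have e2 : DL (DL^[n - i] g) p = DL^[n - i + 1] g p := (Function.iterate_succ_apply' DL (n - i) g).symm ▸ rfl
      have e3 : n - i + 1 = n + 1 - i := by omega
      rw [e1, e2, e3] at h1
      exact h1.const_mul _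
    have hsum := HasDerivAt.fun_sum hterm
    show deriv (fun t => ∑ i ∈ Finset.range (n + 1),
      (n.choose i : ℝ) * (DL^[i] f (p.1, t) * DL^[n - i] g (p.1, t))) p.2 = _
    rw [hsum.deriv]
    have := pascal_sum (fun i => DL^[i] f p) (fun i => DL^[i] g p) n
    calc ∑ i ∈ Finset.range (n + 1), (n.choose i : ℝ)
          * (DL^[i + 1] f p * DL^[n - i] g p + DL^[i] f p * DL^[n + 1 - i] g p)
        = ∑ i ∈ Finset.range (n + 2), ((n + 1).choose i : ℝ) * (DL^[i] f p * DL^[n + 1 - i] g p) := this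
      _ = _ := rfl


-- Clairaut
lemma DY_DL_comm {f : ℝ × ℝ → ℝ} (hf : Sm f) : ∀ p ∈ Om, DY (DL f) p = DL (DY f) p := by
  intro p hp
  have hfc : ContDiffAt ℝ (⊤ : ℕ∞) f p := contDiffAt_of hf hp
  have hN : ContDiffAt ℝ (⊤ : ℕ∞) (fderiv ℝ f) p := hfc.fderiv_right (by simp)
  have hNd : DifferentiableAt ℝ (fderiv ℝ f) p := hN.differentiableAt (by simp)
  have happ : ∀ v : ℝ × ℝ, DifferentiableAt ℝ (fun q => fderiv ℝ f q v) p := fun v =>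
    hNd.clm_apply (differentiableAt_const v)
  have hfder : ∀ v : ℝ × ℝ, fderiv ℝ (fun q => fderiv ℝ f q v) p
      = (fderiv ℝ (fderiv ℝ f) p).flip v := by
    intro v
    rw [fderiv_clm_apply hNd (differentiableAt_const v)]
    simp
  have e1 : DY (DL f) p = fderiv ℝ (fderiv ℝ f) p (1, 0) (0, 1) := by
    have hfun : (fun u => DL f (u, p.2)) = fun u => fderiv ℝ f (u, p.2) (0, 1) :=
      funext fun u => DL_eq_fderiv (diffAt_of hf (by exact hp : ((u, p.2) : ℝ × ℝ).2 ≠ 0))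
    show deriv (fun u => DL f (u, p.2)) p.1 = _
    rw [hfun]
    have h := sliceY_hasDerivAt_fderiv (f := fun q => fderiv ℝ f q (0, 1)) (p := p) (happ (0, 1))
    rw [h.deriv, hfder (0, 1)]
    simp
  have e2 : DL (DY f) p = fderiv ℝ (fderiv ℝ f) p (0, 1) (1, 0) := by
    have hfun : (fun t => DY f (p.1, t)) =ᶠ[nhds p.2] fun t => fderiv ℝ f (p.1, t) (1, 0) := by
      filter_upwards [isOpen_compl_singleton.mem_nhds (hp : p.2 ≠ 0)] with t ht
      exact DY_eq_fderiv (diffAt_of hf (ht : ((p.1, t) : ℝ × ℝ).2 ≠ 0))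
    show deriv (fun t => DY f (p.1, t)) p.2 = _
    rw [hfun.deriv_eq]
    have h := slice_hasDerivAt_fderiv (f := fun q => fderiv ℝ f q (1, 0)) (p := p) (happ (1, 0))
    rw [h.deriv, hfder (1, 0)]
    simp
  rw [e1, e2]
  exact (hfc.isSymmSndFDerivAt (by rw [minSmoothness_of_isRCLikeNormedField]; exact WithTop.coe_le_coe.mpr (le_top : (2:ℕ∞) ≤ ⊤))) _ _


noncomputable def Xf (xinv : ℝ → ℝ → ℝ) : ℝ × ℝ → ℝ := fun p => xinv p.1 p.2
noncomputable def Af (V : ℝ → ℝ) (xinv : ℝ → ℝ → ℝ) : ℝ × ℝ → ℝ :=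
  fun p => p.2 ^ 2 - V (xinv p.1 p.2)
noncomputable def Hf (V : ℝ → ℝ) (xinv : ℝ → ℝ → ℝ) : ℝ × ℝ → ℝ :=
  fun p => (Real.sqrt (Af V xinv p))⁻¹
noncomputable def Ff (V : ℝ → ℝ) (x l : ℝ) : ℝ := ∫ s in (0:ℝ)..x, Real.sqrt (l ^ 2 - V s)
noncomputable def Iif (V : ℝ → ℝ) (xinv : ℝ → ℝ → ℝ) : ℝ × ℝ → ℝ :=
  fun p => ∫ s in (0:ℝ)..(xinv p.1 p.2), (Real.sqrt (p.2 ^ 2 - V s))⁻¹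

structure Hyp (V : ℝ → ℝ) (μ c C0 : ℝ) : Prop where
  hμ0 : 0 < μ
  hμ2 : μ < 2
  hV : ContDiff ℝ (⊤ : ℕ∞) V
  hc : 0 < c
  hlow : ∀ x : ℝ, c * (1 + x ^ 2) ^ (-(μ / 2)) ≤ -V x
  hC0 : 0 < C0
  hup : ∀ x : ℝ, |V x| ≤ C0 * (1 + x ^ 2) ^ (-(μ / 2))
  hVd : ∀ m : ℕ, ∃ C : ℝ, 0 < C ∧ ∀ x : ℝ,
    |iteratedDeriv m V x| ≤ C * (1 + x ^ 2) ^ (-((μ + (m:ℝ))/2))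

structure HypX (V : ℝ → ℝ) (xinv : ℝ → ℝ → ℝ) : Prop where
  smooth : Sm (Xf xinv)
  left : ∀ l : ℝ, l ≠ 0 → ∀ x : ℝ, xinv (Ff V x l) l = x
  right : ∀ l : ℝ, l ≠ 0 → ∀ y : ℝ, Ff V (xinv y l) l = y


variable {V : ℝ → ℝ} {μ c C0 : ℝ} {xinv : ℝ → ℝ → ℝ}

section Basic

lemma Hyp.negV_pos (h : Hyp V μ c C0) (x : ℝ) : 0 < -V x :=
  lt_of_lt_of_le (mul_pos h.hc (Real.rpow_pos_of_pos (by positivity) _)) (h.hlow x)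

lemma Hyp.sq_sub_pos (h : Hyp V μ c C0) (x l : ℝ) : 0 < l ^ 2 - V x := by
  have := h.negV_pos x; nlinarith [sq_nonneg l]

lemma Hyp.sqrt_ge_abs (h : Hyp V μ c C0) (x l : ℝ) : |l| ≤ Real.sqrt (l ^ 2 - V x) := by
  rw [← Real.sqrt_sq_eq_abs]
  exact Real.sqrt_le_sqrt (by have := h.negV_pos x; linarith)

lemma Hyp.contV (h : Hyp V μ c C0) : Continuous V := h.hV.continuous

lemma Hyp.cont_integrand (h : Hyp V μ c C0) (l : ℝ) :
    Continuous fun s => Real.sqrt (l ^ 2 - V s) :=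
  (continuous_const.sub h.contV).sqrt

lemma Hyp.intervalIntegrable (h : Hyp V μ c C0) (l a b : ℝ) :
    IntervalIntegrable (fun s => Real.sqrt (l ^ 2 - V s)) MeasureTheory.volume a b :=
  (h.cont_integrand l).intervalIntegrable _ _

lemma Hyp.hasDerivAt_Ff (h : Hyp V μ c C0) (l x : ℝ) :
    HasDerivAt (fun u => Ff V u l) (Real.sqrt (l ^ 2 - V x)) x := by
  exact intervalIntegral.integral_hasDerivAt_right (h.intervalIntegrable l 0 x)
    ((h.cont_integrand l).stronglyMeasurableAtFilter _ _) (h.cont_integrand l).continuousAt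

lemma Hyp.Ff_sub (h : Hyp V μ c C0) (l a b : ℝ) :
    Ff V b l - Ff V a l = ∫ s in a..b, Real.sqrt (l ^ 2 - V s) := by
  unfold Ff
  rw [← intervalIntegral.integral_add_adjacent_intervals (h.intervalIntegrable l 0 a)
    (h.intervalIntegrable l a b)]
  ring

lemma Hyp.Ff_strictMono (h : Hyp V μ c C0) {l : ℝ} (hl : l ≠ 0) :
    StrictMono fun x => Ff V x l := by
  intro a b hab
  have h1 : Ff V b l - Ff V a l = ∫ s in a..b, Real.sqrt (l ^ 2 - V s) := h.Ff_sub l a b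
  have h2 : ∫ s in a..b, |l| ≤ ∫ s in a..b, Real.sqrt (l ^ 2 - V s) := by
    apply intervalIntegral.integral_mono_on hab.le (intervalIntegrable_const)
      (h.intervalIntegrable l a b)
    intro s _; exact h.sqrt_ge_abs s l
  rw [intervalIntegral.integral_const] at h2
  have h3 : 0 < (b - a) * |l| := by
    apply mul_pos (by linarith) (abs_pos.mpr hl)
  simp only [smul_eq_mul] at h2
  have : 0 < Ff V b l - Ff V a l := by linarith
  linarith

lemma HypX.X_zero (h : Hyp V μ c C0) (hX : HypX V xinv) {l : ℝ} (hl : l ≠ 0) :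
    xinv 0 l = 0 := by
  have := hX.left l hl 0
  simpa [Ff] using this

lemma HypX.X_mono (h : Hyp V μ c C0) (hX : HypX V xinv) {l : ℝ} (hl : l ≠ 0) :
    Monotone fun y => xinv y l := by
  intro u y huy
  by_contra hcon
  push_neg at hcon
  have h2 : Ff V (xinv y l) l < Ff V (xinv u l) l := h.Ff_strictMono hl hcon
  rw [hX.right l hl u, hX.right l hl y] at h2
  exact absurd h2 (not_lt.mpr huy)

lemma HypX.absX_le (h : Hyp V μ c C0) (hX : HypX V xinv) {l : ℝ} (hl : l ≠ 0)
    {y u : ℝ} (hu : u ∈ uIcc (0:ℝ) y) : |xinv u l| ≤ |xinv y l| := by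
  have h0 := hX.X_zero h hl
  rcases le_total (0:ℝ) y with hy | hy
  · rw [uIcc_of_le hy] at hu
    have h1 : xinv 0 l ≤ xinv u l := hX.X_mono h hl hu.1
    have h2 : xinv u l ≤ xinv y l := hX.X_mono h hl hu.2
    rw [h0] at h1
    rw [abs_of_nonneg h1, abs_of_nonneg (le_trans h1 h2)]
    exact h2
  · rw [uIcc_of_ge hy] at hu
    have h1 : xinv u l ≤ xinv 0 l := hX.X_mono h hl hu.2
    have h2 : xinv y l ≤ xinv u l := hX.X_mono h hl hu.1
    rw [h0] at h1
    rw [abs_of_nonpos h1, abs_of_nonpos (le_trans h2 h1)]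
    linarith

lemma Hyp.Af_pos (h : Hyp V μ c C0) (p : ℝ × ℝ) : 0 < Af V xinv p :=
  h.sq_sub_pos _ _

lemma Hyp.sq_le_Af (h : Hyp V μ c C0) (p : ℝ × ℝ) : p.2 ^ 2 ≤ Af V xinv p := by
  have := h.negV_pos (xinv p.1 p.2); unfold Af; nlinarith

lemma Hyp.low_le_Af (h : Hyp V μ c C0) (p : ℝ × ℝ) :
    c * (1 + (xinv p.1 p.2) ^ 2) ^ (-(μ / 2)) ≤ Af V xinv p := by
  have := h.hlow (xinv p.1 p.2); unfold Af; nlinarith [sq_nonneg p.2]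

lemma Hyp.weight_le_Af (h : Hyp V μ c C0) (p : ℝ × ℝ) :
    (1 + (xinv p.1 p.2) ^ 2) ^ (-(μ / 2)) ≤ c⁻¹ * Af V xinv p := by
  have h1 := h.low_le_Af (xinv := xinv) p
  have hc' : (0:ℝ) < c := h.hc
  calc (1 + (xinv p.1 p.2) ^ 2) ^ (-(μ / 2))
      = c⁻¹ * (c * (1 + (xinv p.1 p.2) ^ 2) ^ (-(μ / 2))) := by field_simp
    _ ≤ c⁻¹ * Af V xinv p := mul_le_mul_of_nonneg_left h1 (inv_nonneg.2 hc'.le)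

-- comparison constant
lemma comparison (h : Hyp V μ c C0) (hX : HypX V xinv) {l : ℝ} (hl : l ≠ 0)
    {y u : ℝ} (hu : u ∈ uIcc (0:ℝ) y) :
    min 1 (c / C0) * Af V xinv (y, l) ≤ Af V xinv (u, l) := by
  set X1 := xinv u l
  set X2 := xinv y l
  have habs : |X1| ≤ |X2| := hX.absX_le h hl hu
  have hbase : (1:ℝ) + X2 ^ 2 ≥ 1 + X1 ^ 2 := by nlinarith [sq_abs X1, sq_abs X2, abs_nonneg X1]
  have hrpow : (1 + X2 ^ 2) ^ (-(μ / 2)) ≤ (1 + X1 ^ 2) ^ (-(μ / 2)) :=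
    Real.rpow_le_rpow_of_nonpos (by positivity) hbase
      (by have := h.hμ0; linarith)
  have hup2 : -V X2 ≤ C0 * (1 + X2 ^ 2) ^ (-(μ / 2)) :=
    le_trans (neg_le_abs _) (h.hup X2)
  have hlow1 : c * (1 + X1 ^ 2) ^ (-(μ / 2)) ≤ -V X1 := h.hlow X1
  have key : (c / C0) * (-V X2) ≤ -V X1 := by
    have h1 : (c / C0) * (-V X2) ≤ (c / C0) * (C0 * (1 + X2 ^ 2) ^ (-(μ / 2))) :=
      mul_le_mul_of_nonneg_left hup2 (div_pos h.hc h.hC0).le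
    have h2 : (c / C0) * (C0 * (1 + X2 ^ 2) ^ (-(μ / 2))) = c * (1 + X2 ^ 2) ^ (-(μ / 2)) := by
      rw [div_mul_eq_mul_div, mul_comm C0 ((1 + X2 ^ 2) ^ (-(μ / 2))), ← mul_assoc,
        mul_div_assoc, div_self (ne_of_gt h.hC0), mul_one]
    have h3 : c * (1 + X2 ^ 2) ^ (-(μ / 2)) ≤ c * (1 + X1 ^ 2) ^ (-(μ / 2)) :=
      mul_le_mul_of_nonneg_left hrpow h.hc.le
    linarith
  have hmin1 : min 1 (c / C0) ≤ 1 := min_le_left _ _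
  have hmin2 : min 1 (c / C0) ≤ c / C0 := min_le_right _ _
  have hV2 := h.negV_pos X2
  have hV1 := h.negV_pos X1
  have e1 : min 1 (c / C0) * l ^ 2 ≤ l ^ 2 := mul_le_of_le_one_left (sq_nonneg l) hmin1
  have e2 : min 1 (c / C0) * (-V X2) ≤ -V X1 :=
    le_trans (mul_le_mul_of_nonneg_right hmin2 hV2.le) key
  have goal' : min 1 (c / C0) * (l ^ 2 - V X2) ≤ l ^ 2 - V X1 := by nlinarith [e1, e2]
  simpa [Af, X1, X2] using goal'

end Basic

-- calculus sublemma
lemma calc_integral (h : Hyp V μ c C0) {R : ℝ} (hR : 0 ≤ R) :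
    ∫ s in (0:ℝ)..R, (1 + s ^ 2) ^ (-(μ / 4)) ≤
      (1 - μ / 2)⁻¹ * (R * (1 + R ^ 2) ^ (-(μ / 4))) := by
  have hν : 0 < 1 - μ / 2 := by have := h.hμ2; linarith
  have hν1 : 1 - μ / 2 ≤ 1 := by have := h.hμ0; linarith
  set e : ℝ := -(μ / 4) with he
  have hφ : ∀ s : ℝ, HasDerivAt (fun u : ℝ => u * (1 + u ^ 2) ^ e)
      ((1 + s ^ 2) ^ e + s * (2 * s * e * (1 + s ^ 2) ^ (e - 1))) s := by
    intro s
    have h1 : HasDerivAt (fun u : ℝ => 1 + u ^ 2) (2 * s) s := by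
      simpa using ((hasDerivAt_pow 2 s).const_add 1)
    have h2 : HasDerivAt (fun u : ℝ => (1 + u ^ 2) ^ e) (2 * s * e * (1 + s ^ 2) ^ (e - 1)) s :=
      h1.rpow_const (Or.inl (by positivity))
    simpa using (hasDerivAt_id s).fun_mul h2
  have hptwise : ∀ s : ℝ, (1 + s ^ 2) ^ e ≤
      (1 - μ / 2)⁻¹ * ((1 + s ^ 2) ^ e + s * (2 * s * e * (1 + s ^ 2) ^ (e - 1))) := by
    intro s
    have hb : (0:ℝ) < 1 + s ^ 2 := by positivity
    have hP : (0:ℝ) < (1 + s ^ 2) ^ (e - 1) := Real.rpow_pos_of_pos hb _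
    have hsplit : (1 + s ^ 2) ^ e = (1 + s ^ 2) ^ (e - 1) * (1 + s ^ 2) := by
      rw [← Real.rpow_add_one (ne_of_gt hb) (e - 1), sub_add_cancel]
    rw [hsplit]
    have h2e : (1 - μ / 2)⁻¹ * ((1 + s ^ 2) ^ (e - 1) * (1 + s ^ 2)
          + s * (2 * s * e * (1 + s ^ 2) ^ (e - 1)))
        = ((1 + s ^ 2) ^ (e - 1) * (1 + s ^ 2)
          + s * (2 * s * e * (1 + s ^ 2) ^ (e - 1))) / (1 - μ / 2) := by
      rw [inv_mul_eq_div]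
    rw [h2e, le_div_iff₀ hν, he]
    have hμ0 := h.hμ0
    nlinarith [mul_pos hP hμ0]
  have hcont1 : Continuous fun s : ℝ => (1 + s ^ 2) ^ e :=
    Continuous.rpow_const (by continuity) (fun x => Or.inl (by positivity))
  have hcont2 : Continuous fun s : ℝ =>
      (1 + s ^ 2) ^ e + s * (2 * s * e * (1 + s ^ 2) ^ (e - 1)) := by
    apply hcont1.add
    apply continuous_id.mul
    apply Continuous.mul (by continuity)
    exact Continuous.rpow_const (by continuity) (fun x => Or.inl (by positivity))
  have hFTC : ∫ s in (0:ℝ)..R, ((1 + s ^ 2) ^ e + s * (2 * s * e * (1 + s ^ 2) ^ (e - 1)))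
      = R * (1 + R ^ 2) ^ e - 0 * (1 + (0:ℝ) ^ 2) ^ e := by
    apply intervalIntegral.integral_eq_sub_of_hasDerivAt (fun s _ => hφ s)
      (hcont2.intervalIntegrable _ _)
  have hmono : ∫ s in (0:ℝ)..R, (1 + s ^ 2) ^ e ≤
      ∫ s in (0:ℝ)..R, (1 - μ / 2)⁻¹ * ((1 + s ^ 2) ^ e + s * (2 * s * e * (1 + s ^ 2) ^ (e - 1))) := by
    apply intervalIntegral.integral_mono_on hR (hcont1.intervalIntegrable _ _)
      ((continuous_const.mul hcont2).intervalIntegrable _ _)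
    intro s _; exact hptwise s
  rw [intervalIntegral.integral_const_mul, hFTC] at hmono
  simpa using hmono

lemma sqrt_add_le' {a b : ℝ} (ha : 0 ≤ a) (hb : 0 ≤ b) :
    Real.sqrt (a + b) ≤ Real.sqrt a + Real.sqrt b := by
  have h1 : a + b ≤ (Real.sqrt a + Real.sqrt b) ^ 2 := by
    nlinarith [Real.sq_sqrt ha, Real.sq_sqrt hb, Real.sqrt_nonneg a, Real.sqrt_nonneg b,
      mul_nonneg (Real.sqrt_nonneg a) (Real.sqrt_nonneg b)]
  calc Real.sqrt (a + b) ≤ Real.sqrt ((Real.sqrt a + Real.sqrt b) ^ 2) := Real.sqrt_le_sqrt h1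
    _ = Real.sqrt a + Real.sqrt b := by
        rw [Real.sqrt_sq (by positivity)]

lemma sqrt_weight (s : ℝ) {μ : ℝ} :
    Real.sqrt ((1 + s ^ 2) ^ (-(μ / 2))) = (1 + s ^ 2) ^ (-(μ / 4)) := by
  rw [Real.sqrt_eq_rpow, ← Real.rpow_mul (by positivity)]
  congr 1
  ring

lemma integrand_le (h : Hyp V μ c C0) (l s : ℝ) :
    Real.sqrt (l ^ 2 - V s) ≤ |l| + Real.sqrt C0 * (1 + s ^ 2) ^ (-(μ / 4)) := by
  have h1 : l ^ 2 - V s ≤ l ^ 2 + C0 * (1 + s ^ 2) ^ (-(μ / 2)) := by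
    have h2 := h.hup s
    have h3 := neg_le_abs (V s)
    linarith
  calc Real.sqrt (l ^ 2 - V s) ≤ Real.sqrt (l ^ 2 + C0 * (1 + s ^ 2) ^ (-(μ / 2))) :=
        Real.sqrt_le_sqrt h1
    _ ≤ Real.sqrt (l ^ 2) + Real.sqrt (C0 * (1 + s ^ 2) ^ (-(μ / 2))) :=
        sqrt_add_le' (sq_nonneg l) (mul_nonneg h.hC0.le (Real.rpow_nonneg (by positivity) _))
    _ = |l| + Real.sqrt C0 * (1 + s ^ 2) ^ (-(μ / 4)) := by
        rw [Real.sqrt_sq_eq_abs, Real.sqrt_mul h.hC0.le, sqrt_weight]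

lemma cont_weight (μ : ℝ) : Continuous fun s : ℝ => (1 + s ^ 2) ^ (-(μ / 4)) :=
  Continuous.rpow_const (by continuity) (fun x => Or.inl (by positivity))

lemma integral_bound_aux (h : Hyp V μ c C0) (l : ℝ) {a b : ℝ} (hab : a ≤ b) :
    ∫ s in a..b, Real.sqrt (l ^ 2 - V s)
      ≤ |l| * (b - a) + Real.sqrt C0 * ∫ s in a..b, (1 + s ^ 2) ^ (-(μ / 4)) := by
  have hint : IntervalIntegrable (fun s : ℝ => |l| + Real.sqrt C0 * (1 + s ^ 2) ^ (-(μ / 4)))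
      MeasureTheory.volume a b :=
    (continuous_const.add (continuous_const.mul (cont_weight μ))).intervalIntegrable _ _
  have h1 : ∫ s in a..b, Real.sqrt (l ^ 2 - V s)
      ≤ ∫ s in a..b, (|l| + Real.sqrt C0 * (1 + s ^ 2) ^ (-(μ / 4))) := by
    apply intervalIntegral.integral_mono_on hab (h.intervalIntegrable l a b) hint
    intro s _; exact integrand_le h l s
  have h2 : ∫ s in a..b, (|l| + Real.sqrt C0 * (1 + s ^ 2) ^ (-(μ / 4)))
      = |l| * (b - a) + Real.sqrt C0 * ∫ s in a..b, (1 + s ^ 2) ^ (-(μ / 4)) := by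
    rw [intervalIntegral.integral_add (intervalIntegrable_const)
      ((continuous_const.fun_mul (cont_weight μ)).intervalIntegrable _ _),
      intervalIntegral.integral_const, intervalIntegral.integral_const_mul]
    simp [mul_comm]
  linarith

lemma y_le (h : Hyp V μ c C0) (hX : HypX V xinv) {y l : ℝ} (hl : l ≠ 0) :
    |y| ≤ (1 + Real.sqrt C0 * (1 - μ / 2)⁻¹ * (Real.sqrt c)⁻¹) * |xinv y l|
      * Real.sqrt (Af V xinv (y, l)) := by
  set X := xinv y l with hXdef
  set A := Af V xinv (y, l) with hAdef
  have hA0 : 0 < A := h.Af_pos _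
  have hy : y = Ff V X l := (hX.right l hl y).symm
  have hl_le : |l| ≤ Real.sqrt A := by
    have := h.sqrt_ge_abs X l
    simpa [hAdef, Af] using this
  have hw_le : (1 + X ^ 2) ^ (-(μ / 4)) ≤ (Real.sqrt c)⁻¹ * Real.sqrt A := by
    have h1 : (1 + X ^ 2) ^ (-(μ / 2)) ≤ c⁻¹ * A := by
      have := h.weight_le_Af (xinv := xinv) (p := (y, l))
      simpa [hAdef, hXdef, Af] using this
    calc (1 + X ^ 2) ^ (-(μ / 4)) = Real.sqrt ((1 + X ^ 2) ^ (-(μ / 2))) := (sqrt_weight X).symm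
      _ ≤ Real.sqrt (c⁻¹ * A) := Real.sqrt_le_sqrt h1
      _ = (Real.sqrt c)⁻¹ * Real.sqrt A := by
          rw [Real.sqrt_mul (inv_nonneg.2 h.hc.le), Real.sqrt_inv]
  have hν : 0 < 1 - μ / 2 := by have := h.hμ2; linarith
  have hF0 : Ff V 0 l = 0 := by simp [Ff]
  rcases le_total 0 X with hX0 | hX0
  · have hy0 : 0 ≤ y := by
      have h5 : Ff V 0 l ≤ Ff V X l := (h.Ff_strictMono hl).monotone hX0
      rw [hF0] at h5; linarith [hy ▸ h5]
    have hcalc := calc_integral (h := h) hX0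
    have hb := integral_bound_aux h l hX0
    have habs : |y| = y := abs_of_nonneg hy0
    have hXabs : |X| = X := abs_of_nonneg hX0
    rw [habs, hy]
    show Ff V X l ≤ _
    unfold Ff
    calc ∫ s in (0:ℝ)..X, Real.sqrt (l ^ 2 - V s)
        ≤ |l| * (X - 0) + Real.sqrt C0 * ∫ s in (0:ℝ)..X, (1 + s ^ 2) ^ (-(μ / 4)) := hb
      _ ≤ |l| * X + Real.sqrt C0 * ((1 - μ / 2)⁻¹ * (X * (1 + X ^ 2) ^ (-(μ / 4)))) := by
          have h6 := mul_le_mul_of_nonneg_left hcalc (Real.sqrt_nonneg C0)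
          linarith
      _ ≤ Real.sqrt A * X
          + Real.sqrt C0 * ((1 - μ / 2)⁻¹ * (X * ((Real.sqrt c)⁻¹ * Real.sqrt A))) := by
          have e1 : |l| * X ≤ Real.sqrt A * X := mul_le_mul_of_nonneg_right hl_le hX0
          have e2 : X * (1 + X ^ 2) ^ (-(μ / 4)) ≤ X * ((Real.sqrt c)⁻¹ * Real.sqrt A) :=
            mul_le_mul_of_nonneg_left hw_le hX0
          have e3 := mul_le_mul_of_nonneg_left
            (mul_le_mul_of_nonneg_left e2 (inv_nonneg.2 hν.le)) (Real.sqrt_nonneg C0)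
          linarith
      _ = (1 + Real.sqrt C0 * (1 - μ / 2)⁻¹ * (Real.sqrt c)⁻¹) * X * Real.sqrt A := by ring
      _ = (1 + Real.sqrt C0 * (1 - μ / 2)⁻¹ * (Real.sqrt c)⁻¹) * |X| * Real.sqrt A := by
          rw [hXabs]
  · have hy0 : y ≤ 0 := by
      have h5 : Ff V X l ≤ Ff V 0 l := (h.Ff_strictMono hl).monotone hX0
      rw [hF0] at h5; linarith [hy ▸ h5]
    have habs : |y| = -y := abs_of_nonpos hy0
    have hXabs : |X| = -X := abs_of_nonpos hX0
    have hXneg : (0:ℝ) ≤ -X := by linarith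
    have hyneg : -y = ∫ s in X..(0:ℝ), Real.sqrt (l ^ 2 - V s) := by
      have h7 := h.Ff_sub l X 0
      rw [hF0] at h7
      rw [hy]; linarith
    have hb := integral_bound_aux h l hX0
    have hflip : ∫ s in X..(0:ℝ), (1 + s ^ 2) ^ (-(μ / 4))
        = ∫ s in (0:ℝ)..(-X), (1 + s ^ 2) ^ (-(μ / 4)) := by
      have h8 : ∫ s in (0:ℝ)..(-X), (1 + (-s) ^ 2) ^ (-(μ / 4))
          = ∫ s in X..(0:ℝ), (1 + s ^ 2) ^ (-(μ / 4)) := by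
        rw [intervalIntegral.integral_comp_neg (fun s => (1 + s ^ 2) ^ (-(μ / 4)))]
        norm_num
      rw [← h8]
      simp only [neg_sq]
    have hcalc := calc_integral (h := h) hXneg
    rw [habs, hyneg]
    calc ∫ s in X..(0:ℝ), Real.sqrt (l ^ 2 - V s)
        ≤ |l| * (0 - X) + Real.sqrt C0 * ∫ s in X..(0:ℝ), (1 + s ^ 2) ^ (-(μ / 4)) := hb
      _ = |l| * (-X) + Real.sqrt C0 * ∫ s in (0:ℝ)..(-X), (1 + s ^ 2) ^ (-(μ / 4)) := by
          rw [hflip]; ring_nf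
      _ ≤ |l| * (-X) + Real.sqrt C0 * ((1 - μ / 2)⁻¹ * ((-X) * (1 + (-X) ^ 2) ^ (-(μ / 4)))) := by
          have h6 := mul_le_mul_of_nonneg_left hcalc (Real.sqrt_nonneg C0)
          linarith
      _ = |l| * (-X) + Real.sqrt C0 * ((1 - μ / 2)⁻¹ * ((-X) * (1 + X ^ 2) ^ (-(μ / 4)))) := by
          rw [neg_sq]
      _ ≤ Real.sqrt A * (-X)
          + Real.sqrt C0 * ((1 - μ / 2)⁻¹ * ((-X) * ((Real.sqrt c)⁻¹ * Real.sqrt A))) := by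
          have e1 : |l| * (-X) ≤ Real.sqrt A * (-X) := mul_le_mul_of_nonneg_right hl_le hXneg
          have e2 : (-X) * (1 + X ^ 2) ^ (-(μ / 4)) ≤ (-X) * ((Real.sqrt c)⁻¹ * Real.sqrt A) :=
            mul_le_mul_of_nonneg_left hw_le hXneg
          have e3 := mul_le_mul_of_nonneg_left
            (mul_le_mul_of_nonneg_left e2 (inv_nonneg.2 hν.le)) (Real.sqrt_nonneg C0)
          linarith
      _ = (1 + Real.sqrt C0 * (1 - μ / 2)⁻¹ * (Real.sqrt c)⁻¹) * (-X) * Real.sqrt A := by ring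
      _ = (1 + Real.sqrt C0 * (1 - μ / 2)⁻¹ * (Real.sqrt c)⁻¹) * |X| * Real.sqrt A := by
          rw [hXabs]


-- ===== Stage 4 : analytic layer =====

noncomputable def Wm (V : ℝ → ℝ) (xinv : ℝ → ℝ → ℝ) (m : ℕ) : ℝ × ℝ → ℝ :=
  fun p => iteratedDeriv m V (xinv p.1 p.2)

lemma contDiff_iteratedDeriv_top {V : ℝ → ℝ} (hV : ContDiff ℝ (⊤ : ℕ∞) V) (m : ℕ) :
    ContDiff ℝ (⊤ : ℕ∞) (iteratedDeriv m V) := by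
  induction m with
  | zero => simpa [iteratedDeriv_zero] using hV
  | succ m ih =>
    rw [iteratedDeriv_succ]
    have h1 : ContDiff ℝ (⊤ : ℕ∞) (fderiv ℝ (iteratedDeriv m V)) := ih.fderiv_right (by simp)
    have h2 : ContDiff ℝ (⊤ : ℕ∞) (fun x => fderiv ℝ (iteratedDeriv m V) x 1) :=
      h1.clm_apply contDiff_const
    have e : deriv (iteratedDeriv m V) = fun x => fderiv ℝ (iteratedDeriv m V) x 1 := by
      funext x; rw [fderiv_apply_one_eq_deriv]
    rw [e]; exact h2

variable {V : ℝ → ℝ} {μ c C0 : ℝ} {xinv : ℝ → ℝ → ℝ}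

lemma smooth_W (h : Hyp V μ c C0) (hX : HypX V xinv) (m : ℕ) : Sm (Wm V xinv m) :=
  (contDiff_iteratedDeriv_top h.hV m).comp_contDiffOn hX.smooth

lemma smooth_A (h : Hyp V μ c C0) (hX : HypX V xinv) : Sm (Af V xinv) := by
  have h1 : Sm (fun p : ℝ × ℝ => p.2 ^ 2) := (contDiff_snd.pow 2).contDiffOn
  have h2 : Sm (fun p : ℝ × ℝ => V (xinv p.1 p.2)) := h.hV.comp_contDiffOn hX.smooth
  exact h1.sub h2

lemma sqrtA_pos (h : Hyp V μ c C0) (p : ℝ × ℝ) : 0 < Real.sqrt (Af V xinv p) :=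
  Real.sqrt_pos.2 (h.Af_pos p)

lemma smooth_sqrtA (h : Hyp V μ c C0) (hX : HypX V xinv) :
    Sm (fun p => Real.sqrt (Af V xinv p)) :=
  (smooth_A h hX).sqrt fun p _ => ne_of_gt (h.Af_pos p)

lemma smooth_H (h : Hyp V μ c C0) (hX : HypX V xinv) : Sm (Hf V xinv) :=
  (smooth_sqrtA h hX).inv fun p _ => ne_of_gt (sqrtA_pos h p)

lemma DY_X (h : Hyp V μ c C0) (hX : HypX V xinv) :
    ∀ p ∈ Om, DY (Xf xinv) p = Hf V xinv p := by
  rintro ⟨y, l⟩ hp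
  have hl : l ≠ 0 := hp
  set x := xinv y l with hx
  have hFxl : Ff V x l = y := hX.right l hl y
  have hinner : HasDerivAt (fun u => Ff V u l) (Real.sqrt (l ^ 2 - V x)) x := h.hasDerivAt_Ff l x
  have houter : HasDerivAt (fun u' => xinv u' l) (DY (Xf xinv) (y, l)) (Ff V x l) := by
    rw [hFxl]
    exact sliceY_hasDerivAt_DY hX.smooth (p := (y, l)) hp
  have hcomp : HasDerivAt ((fun u' => xinv u' l) ∘ (fun u => Ff V u l))
      (DY (Xf xinv) (y, l) * Real.sqrt (l ^ 2 - V x)) x := houter.comp x hinner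
  have hid : ((fun u' => xinv u' l) ∘ (fun u => Ff V u l)) = fun u => u :=
    funext fun u => hX.left l hl u
  rw [hid] at hcomp
  have hone : DY (Xf xinv) (y, l) * Real.sqrt (l ^ 2 - V x) = 1 :=
    hcomp.unique (hasDerivAt_id x)
  have hs : Real.sqrt (l ^ 2 - V x) ≠ 0 := ne_of_gt (Real.sqrt_pos.2 (h.sq_sub_pos x l))
  show DY (Xf xinv) (y, l) = (Real.sqrt (Af V xinv (y, l)))⁻¹
  have : Af V xinv (y, l) = l ^ 2 - V x := rfl
  rw [this]
  have h9 := congrArg (fun z => z * (Real.sqrt (l ^ 2 - V x))⁻¹) hone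
  simpa [mul_assoc, mul_inv_cancel₀ hs] using h9

lemma Iif_zero (h : Hyp V μ c C0) (hX : HypX V xinv) {t : ℝ} (ht : t ≠ 0) :
    Iif V xinv (0, t) = 0 := by
  have h0 : xinv 0 t = 0 := hX.X_zero h ht
  simp [Iif, h0]

lemma hasDerivAt_Ff_param (h : Hyp V μ c C0) (x : ℝ) {l : ℝ} (hl : l ≠ 0) :
    HasDerivAt (fun t => Ff V x t)
      (∫ s in (0:ℝ)..x, l * (Real.sqrt (l ^ 2 - V s))⁻¹) l := by
  have hε : 0 < |l| / 2 := half_pos (abs_pos.2 hl)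
  have hcont' : ∀ t : ℝ, Continuous fun s => t * (Real.sqrt (t ^ 2 - V s))⁻¹ := by
    intro t
    exact continuous_const.mul ((h.cont_integrand t).inv₀
      (fun s => ne_of_gt (Real.sqrt_pos.2 (h.sq_sub_pos s t))))
  have key := intervalIntegral.hasDerivAt_integral_of_dominated_loc_of_deriv_le
    (F := fun (t : ℝ) (s : ℝ) => Real.sqrt (t ^ 2 - V s))
    (F' := fun (t : ℝ) (s : ℝ) => t * (Real.sqrt (t ^ 2 - V s))⁻¹)
    (a := 0) (b := x) (x₀ := l) (bound := fun _ => 1) (Metric.ball_mem_nhds l hε)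
    (Filter.Eventually.of_forall fun t => ((h.cont_integrand t).aestronglyMeasurable).restrict)
    (h.intervalIntegrable l 0 x)
    ((hcont' l).aestronglyMeasurable.restrict)
    ?_ (intervalIntegrable_const) ?_
  · exact key.2
  · apply MeasureTheory.ae_of_all
    intro s _ t _
    have h1 : |t| ≤ Real.sqrt (t ^ 2 - V s) := h.sqrt_ge_abs s t
    have h2 : 0 < Real.sqrt (t ^ 2 - V s) := Real.sqrt_pos.2 (h.sq_sub_pos s t)
    rw [Real.norm_eq_abs, abs_mul, abs_inv, abs_of_nonneg (Real.sqrt_nonneg _)]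
    rw [mul_inv_le_iff₀ h2, one_mul]
    exact h1
  · apply MeasureTheory.ae_of_all
    intro s _ t _
    have hpos : (0:ℝ) < t ^ 2 - V s := h.sq_sub_pos s t
    have hinner : HasDerivAt (fun u : ℝ => u ^ 2 - V s) (2 * t) t := by
      simpa using (hasDerivAt_pow 2 t).sub_const (V s)
    have hsq := (Real.hasDerivAt_sqrt (ne_of_gt hpos)).comp t hinner
    convert hsq using 1
    have hs : Real.sqrt (t ^ 2 - V s) ≠ 0 := ne_of_gt (Real.sqrt_pos.2 hpos)
    · rfl
    · rfl
    · ring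

lemma DL_X (h : Hyp V μ c C0) (hX : HypX V xinv) :
    ∀ p ∈ Om, DL (Xf xinv) p = -(p.2 * Hf V xinv p * Iif V xinv p) := by
  rintro ⟨y, l⟩ hp
  have hl : l ≠ 0 := hp
  set x := xinv y l with hx
  have hFxl : Ff V x l = y := hX.right l hl y
  set L := fderiv ℝ (Xf xinv) (y, l) with hL
  have hLd : HasFDerivAt (Xf xinv) L ((Ff V x l, l) : ℝ × ℝ) := by
    rw [hFxl]; exact (diffAt_of hX.smooth hp).hasFDerivAt
  set val := ∫ s in (0:ℝ)..x, l * (Real.sqrt (l ^ 2 - V s))⁻¹ with hval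
  have hFt : HasDerivAt (fun t => Ff V x t) val l := hasDerivAt_Ff_param h x hl
  have hpair : HasDerivAt (fun t => ((Ff V x t, t) : ℝ × ℝ)) ((val, 1) : ℝ × ℝ) l :=
    hFt.prodMk (hasDerivAt_id l)
  have hcomp : HasDerivAt ((Xf xinv) ∘ fun t => ((Ff V x t, t) : ℝ × ℝ)) (L (val, 1)) l :=
    HasFDerivAt.comp_hasDerivAt (f := fun t => ((Ff V x t, t) : ℝ × ℝ)) l hLd hpair
  have hev : ((Xf xinv) ∘ fun t => ((Ff V x t, t) : ℝ × ℝ)) =ᶠ[nhds l] fun _ => x := by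
    filter_upwards [isOpen_compl_singleton.mem_nhds (hl : l ∈ ({0}ᶜ : Set ℝ))] with t ht
    exact hX.left t ht x
  have hder0 : L (val, 1) = 0 := by
    rw [← hcomp.deriv, hev.deriv_eq, deriv_const]
  have hdecomp : ((val, 1) : ℝ × ℝ) = val • ((1:ℝ), (0:ℝ)) + ((0:ℝ), (1:ℝ)) := by
    simp [Prod.ext_iff]
  have hsplit : L (val, 1) = val * L (1, 0) + L (0, 1) := by
    rw [hdecomp, map_add, map_smul]
    simp
  have hL10 : L (1, 0) = Hf V xinv (y, l) := by
    rw [← DY_eq_fderiv (diffAt_of hX.smooth hp)]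
    exact DY_X h hX (y, l) hp
  have hL01 : L (0, 1) = DL (Xf xinv) (y, l) :=
    (DL_eq_fderiv (diffAt_of hX.smooth hp)).symm
  have hvalI : val = l * Iif V xinv (y, l) := by
    rw [hval]
    exact intervalIntegral.integral_const_mul l _
  have : 0 = l * Iif V xinv (y, l) * Hf V xinv (y, l) + DL (Xf xinv) (y, l) := by
    rw [← hvalI, ← hL10, ← hL01, ← hsplit, hder0]
  show DL (Xf xinv) (y, l) = -(l * Hf V xinv (y, l) * Iif V xinv (y, l))
  linarith [this]

lemma Iif_eq (h : Hyp V μ c C0) (hX : HypX V xinv) :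
    ∀ p ∈ Om, Iif V xinv p = -(DL (Xf xinv) p) * Real.sqrt (Af V xinv p) / p.2 := by
  intro p hp
  rw [DL_X h hX p hp]
  have hs : Real.sqrt (Af V xinv p) ≠ 0 := ne_of_gt (sqrtA_pos h p)
  have hp2 : (p.2 : ℝ) ≠ 0 := hp
  show Iif V xinv p = -(-(p.2 * (Real.sqrt (Af V xinv p))⁻¹ * Iif V xinv p))
    * Real.sqrt (Af V xinv p) / p.2
  field_simp

lemma smooth_I (h : Hyp V μ c C0) (hX : HypX V xinv) : Sm (Iif V xinv) := by
  have hsm : Sm (fun p => -(DL (Xf xinv) p) * Real.sqrt (Af V xinv p) / p.2) := by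
    apply ContDiffOn.div
    · exact ((hX.smooth.dl).neg).mul (smooth_sqrtA h hX)
    · exact contDiff_snd.contDiffOn
    · exact fun p hp => hp
  exact hsm.congr (Iif_eq h hX)

lemma DY_I (h : Hyp V μ c C0) (hX : HypX V xinv) :
    ∀ p ∈ Om, DY (Iif V xinv) p = Hf V xinv p * Hf V xinv p := by
  rintro ⟨y, l⟩ hp
  have hl : l ≠ 0 := hp
  have hg : Continuous fun s => (Real.sqrt (l ^ 2 - V s))⁻¹ :=
    (h.cont_integrand l).inv₀ fun s => ne_of_gt (Real.sqrt_pos.2 (h.sq_sub_pos s l))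
  have hG : HasDerivAt (fun z => ∫ s in (0:ℝ)..z, (Real.sqrt (l ^ 2 - V s))⁻¹)
      ((Real.sqrt (l ^ 2 - V (xinv y l)))⁻¹) (xinv y l) :=
    intervalIntegral.integral_hasDerivAt_right (hg.intervalIntegrable _ _)
      (hg.stronglyMeasurableAtFilter _ _) hg.continuousAt
  have houter : HasDerivAt (fun u => xinv u l) (DY (Xf xinv) (y, l)) y :=
    sliceY_hasDerivAt_DY hX.smooth (p := (y, l)) hp
  have hcomp := hG.comp y houter
  show deriv (fun u => Iif V xinv (u, l)) y = _
  have : (fun u => Iif V xinv (u, l))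
      = (fun z => ∫ s in (0:ℝ)..z, (Real.sqrt (l ^ 2 - V s))⁻¹) ∘ (fun u => xinv u l) := rfl
  rw [this, hcomp.deriv, DY_X h hX (y, l) hp]
  rfl

lemma DY_DLn {f g : ℝ × ℝ → ℝ} (hf : Sm f) (hfg : ∀ q ∈ Om, DY f q = g q) (n : ℕ) :
    ∀ p ∈ Om, DY (DL^[n] f) p = DL^[n] g p := by
  induction n with
  | zero => exact hfg
  | succ n ih =>
    intro p hp
    rw [Function.iterate_succ_apply', Function.iterate_succ_apply']
    rw [DY_DL_comm (hf.dln n) p hp]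
    exact DL_congr ih hp

lemma I_rep (h : Hyp V μ c C0) (hX : HypX V xinv) (j : ℕ) (y : ℝ) {l : ℝ} (hl : l ≠ 0) :
    DL^[j] (Iif V xinv) (y, l)
      = ∫ u in (0:ℝ)..y, DL^[j] (fun q => Hf V xinv q * Hf V xinv q) (u, l) := by
  have hsmI := smooth_I h hX
  have hsmQ : Sm (fun q => Hf V xinv q * Hf V xinv q) := (smooth_H h hX).mul (smooth_H h hX)
  have hDY : ∀ u : ℝ, HasDerivAt (fun u' => DL^[j] (Iif V xinv) (u', l))
      (DL^[j] (fun q => Hf V xinv q * Hf V xinv q) (u, l)) u := by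
    intro u
    have h1 := sliceY_hasDerivAt_DY (hsmI.dln j) (p := (u, l)) hl
    rwa [DY_DLn hsmI (DY_I h hX) j (u, l) hl] at h1
  have hcont : Continuous fun u => DL^[j] (fun q => Hf V xinv q * Hf V xinv q) (u, l) := by
    have h2 := (hsmQ.dln j).continuousOn
    exact h2.comp_continuous (Continuous.prodMk continuous_id continuous_const)
      (fun u => (hl : ((u, l) : ℝ × ℝ).2 ≠ 0))
  have hFTC := intervalIntegral.integral_eq_sub_of_hasDerivAt
    (f := fun u' => DL^[j] (Iif V xinv) (u', l)) (fun u _ => hDY u)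
    (hcont.intervalIntegrable 0 y)
  have h0 : DL^[j] (Iif V xinv) (0, l) = 0 :=
    DLn_zero_slice (fun t ht => Iif_zero h hX ht) j l hl
  rw [hFTC]
  show DL^[j] (Iif V xinv) (y, l)
    = DL^[j] (Iif V xinv) (y, l) - DL^[j] (Iif V xinv) (0, l)
  rw [h0, sub_zero]

lemma DL_W (h : Hyp V μ c C0) (hX : HypX V xinv) (m : ℕ) :
    ∀ p ∈ Om, DL (Wm V xinv m) p = Wm V xinv (m + 1) p * DL (Xf xinv) p := by
  intro p hp
  have houter : HasDerivAt (iteratedDeriv m V) (iteratedDeriv (m + 1) V (xinv p.1 p.2))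
      (xinv p.1 p.2) := by
    rw [iteratedDeriv_succ]
    exact (((contDiff_iteratedDeriv_top h.hV m).differentiable (by simp)).differentiableAt).hasDerivAt
  have hinner := slice_hasDerivAt_DL hX.smooth hp
  have hcomp := houter.comp p.2 hinner
  exact hcomp.deriv

lemma DL_H (h : Hyp V μ c C0) (hX : HypX V xinv) :
    ∀ p ∈ Om, DL (Hf V xinv) p
      = -(1/2) * (Hf V xinv p * (Hf V xinv p * Hf V xinv p)) * DL (Af V xinv) p := by
  intro p hp
  have hApos := h.Af_pos (xinv := xinv) p
  have hinner := slice_hasDerivAt_DL (smooth_A h hX) hp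
  have hsqrt := (Real.hasDerivAt_sqrt (ne_of_gt hApos)).comp p.2 hinner
  have hs : Real.sqrt (Af V xinv p) ≠ 0 := ne_of_gt (sqrtA_pos h p)
  have hinv := hsqrt.inv hs
  have hder : DL (Hf V xinv) p
      = -(1 / (2 * Real.sqrt (Af V xinv p)) * DL (Af V xinv) p)
        / Real.sqrt (Af V xinv p) ^ 2 := hinv.deriv
  rw [hder]
  simp only [Hf]
  rw [div_eq_iff (pow_ne_zero 2 hs)]
  have hsq : Real.sqrt (Af V xinv p) ^ 2 = Af V xinv p := Real.sq_sqrt hApos.le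
  field_simp

-- ===== Stage 5 : estimate engine =====

def UpTo (V : ℝ → ℝ) (xinv : ℝ → ℝ → ℝ) (k : ℕ) (F w : ℝ × ℝ → ℝ) (e C : ℝ) : Prop :=
  ∀ j, j ≤ k → ∀ p ∈ Om, |DL^[j] F p| ≤ C * w p * Af V xinv p ^ (e - (j:ℝ)/2)

lemma UpTo.mono {k k' : ℕ} {F w : ℝ × ℝ → ℝ} {e C : ℝ}
    (hb : UpTo V xinv k F w e C) (hk : k' ≤ k) : UpTo V xinv k' F w e C :=
  fun j hj => hb j (le_trans hj hk)

lemma UpTo.congr {k : ℕ} {F G w : ℝ × ℝ → ℝ} {e C : ℝ}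
    (hb : UpTo V xinv k F w e C) (hFG : ∀ q ∈ Om, G q = F q) : UpTo V xinv k G w e C := by
  intro j hj p hp
  rw [DLn_congr hFG j p hp]
  exact hb j hj p hp

lemma DLn_neg {F : ℝ × ℝ → ℝ} (n : ℕ) :
    ∀ p ∈ Om, DL^[n] (fun q => -(F q)) p = -(DL^[n] F p) := by
  induction n with
  | zero => intro p _; rfl
  | succ n ih =>
    intro p hp
    rw [Function.iterate_succ_apply', Function.iterate_succ_apply']
    rw [DL_congr ih hp]
    show deriv (fun t => -(DL^[n] F (p.1, t))) p.2 = _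
    rw [deriv.fun_neg]
    rfl

lemma UpTo.neg {k : ℕ} {F w : ℝ × ℝ → ℝ} {e C : ℝ}
    (hb : UpTo V xinv k F w e C) : UpTo V xinv k (fun q => -(F q)) w e C := by
  intro j hj p hp
  rw [DLn_neg j p hp, abs_neg]
  exact hb j hj p hp

lemma UpTo_shift {k : ℕ} {F w : ℝ × ℝ → ℝ} {e C : ℝ}
    (hb : UpTo V xinv (k + 1) F w e C) : UpTo V xinv k (DL F) w (e - 1/2) C := by
  intro j hj p hp
  have h1 : DL^[j] (DL F) p = DL^[j + 1] F p := by
    rw [← Function.iterate_succ_apply]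
  rw [h1]
  have h2 := hb (j + 1) (by omega) p hp
  have h3 : e - ((j:ℝ) + 1)/2 = (e - 1/2) - (j:ℝ)/2 := by ring
  calc |DL^[j + 1] F p| ≤ C * w p * Af V xinv p ^ (e - ((j:ℝ) + 1)/2) := by
        convert h2 using 3
        push_cast
        ring
    _ = C * w p * Af V xinv p ^ ((e - 1/2) - (j:ℝ)/2) := by rw [h3]

lemma UpTo.mul (h : Hyp V μ c C0) {k : ℕ} {F G wF wG : ℝ × ℝ → ℝ} {eF eG CF CG : ℝ}
    (hF : Sm F) (hG : Sm G)
    (hwF : ∀ p ∈ Om, 0 ≤ wF p) (hwG : ∀ p ∈ Om, 0 ≤ wG p)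
    (hCF : 0 ≤ CF) (hCG : 0 ≤ CG)
    (hFb : UpTo V xinv k F wF eF CF) (hGb : UpTo V xinv k G wG eG CG) :
    UpTo V xinv k (fun q => F q * G q) (fun q => wF q * wG q) (eF + eG)
      ((2:ℝ) ^ k * CF * CG) := by
  intro j hj p hp
  have hA := h.Af_pos (xinv := xinv) p
  rw [DL_leibniz hF hG j p hp]
  have key : ∀ i ∈ Finset.range (j + 1),
      |(j.choose i : ℝ) * (DL^[i] F p * DL^[j - i] G p)|
      ≤ (j.choose i : ℝ) * (CF * CG * (wF p * wG p)
          * Af V xinv p ^ ((eF + eG) - (j:ℝ)/2)) := by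
    intro i hi
    have hij : i ≤ j := Nat.lt_succ_iff.mp (Finset.mem_range.mp hi)
    have h1 := hFb i (le_trans hij hj) p hp
    have h2 := hGb (j - i) (le_trans (Nat.sub_le j i) hj) p hp
    have hprod : |DL^[i] F p| * |DL^[j - i] G p|
        ≤ (CF * wF p * Af V xinv p ^ (eF - (i:ℝ)/2))
          * (CG * wG p * Af V xinv p ^ (eG - ((j:ℝ) - (i:ℝ))/2)) := by
      have h2' : |DL^[j - i] G p| ≤ CG * wG p * Af V xinv p ^ (eG - ((j:ℝ) - (i:ℝ))/2) := by
        convert h2 using 3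
        push_cast [Nat.cast_sub hij]
        ring
      exact mul_le_mul h1 h2' (abs_nonneg _)
        (mul_nonneg (mul_nonneg hCF (hwF p hp)) (Real.rpow_nonneg hA.le _))
    have hcomb : (CF * wF p * Af V xinv p ^ (eF - (i:ℝ)/2))
        * (CG * wG p * Af V xinv p ^ (eG - ((j:ℝ) - (i:ℝ))/2))
        = CF * CG * (wF p * wG p) * Af V xinv p ^ ((eF + eG) - (j:ℝ)/2) := by
      rw [show (eF + eG) - (j:ℝ)/2 = (eF - (i:ℝ)/2) + (eG - ((j:ℝ) - (i:ℝ))/2) by ring]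
      rw [Real.rpow_add hA]
      ring
    rw [abs_mul, abs_mul, Nat.abs_cast]
    calc (j.choose i : ℝ) * (|DL^[i] F p| * |DL^[j - i] G p|)
        ≤ (j.choose i : ℝ) * ((CF * wF p * Af V xinv p ^ (eF - (i:ℝ)/2))
            * (CG * wG p * Af V xinv p ^ (eG - ((j:ℝ) - (i:ℝ))/2))) := by
          apply mul_le_mul_of_nonneg_left hprod (Nat.cast_nonneg _)
      _ = (j.choose i : ℝ) * (CF * CG * (wF p * wG p)
            * Af V xinv p ^ ((eF + eG) - (j:ℝ)/2)) := by rw [hcomb]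
  calc |∑ i ∈ Finset.range (j + 1), (j.choose i : ℝ) * (DL^[i] F p * DL^[j - i] G p)|
      ≤ ∑ i ∈ Finset.range (j + 1), |(j.choose i : ℝ) * (DL^[i] F p * DL^[j - i] G p)| :=
        Finset.abs_sum_le_sum_abs _ _
    _ ≤ ∑ i ∈ Finset.range (j + 1), (j.choose i : ℝ) * (CF * CG * (wF p * wG p)
          * Af V xinv p ^ ((eF + eG) - (j:ℝ)/2)) := Finset.sum_le_sum key
    _ = (∑ i ∈ Finset.range (j + 1), (j.choose i : ℝ)) * (CF * CG * (wF p * wG p)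
          * Af V xinv p ^ ((eF + eG) - (j:ℝ)/2)) := by rw [← Finset.sum_mul]
    _ = (2:ℝ) ^ j * (CF * CG * (wF p * wG p)
          * Af V xinv p ^ ((eF + eG) - (j:ℝ)/2)) := by
        congr 1
        rw [← Nat.cast_sum]
        rw [Nat.sum_range_choose]
        push_cast
        ring
    _ ≤ (2:ℝ) ^ k * (CF * CG * (wF p * wG p)
          * Af V xinv p ^ ((eF + eG) - (j:ℝ)/2)) := by
        apply mul_le_mul_of_nonneg_right (by
          apply pow_le_pow_right₀ (by norm_num) hj)
        have := hwF p hp; have := hwG p hp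
        positivity
    _ = (2:ℝ) ^ k * CF * CG * (wF p * wG p)
          * Af V xinv p ^ ((eF + eG) - (j:ℝ)/2) := by ring

lemma rpow_exp_congr (p : ℝ × ℝ) {a b : ℝ} (hab : a = b) :
    Af V xinv p ^ a = Af V xinv p ^ b := by rw [hab]

lemma DL_snd_eq : DL (fun p : ℝ × ℝ => p.2) = fun _ => (1:ℝ) :=
  funext fun p => by simp [DL]

lemma DL_const_eq (a : ℝ) : DL (fun _ : ℝ × ℝ => a) = fun _ => (0:ℝ) :=
  funext fun p => by simp [DL]

lemma DLn_zero_fun (m : ℕ) : DL^[m] (fun _ : ℝ × ℝ => (0:ℝ)) = fun _ => (0:ℝ) := by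
  induction m with
  | zero => rfl
  | succ m ih => rw [Function.iterate_succ_apply, DL_const_eq]; exact ih

lemma upTo_lambda (h : Hyp V μ c C0) (k : ℕ) :
    UpTo V xinv k (fun p => p.2) (fun _ => 1) (1/2) 1 := by
  intro j hj p hp
  have hA := h.Af_pos (xinv := xinv) p
  match j with
  | 0 =>
    show |p.2| ≤ 1 * 1 * Af V xinv p ^ ((1:ℝ)/2 - ((0:ℕ):ℝ)/2)
    rw [rpow_exp_congr p (show (1:ℝ)/2 - ((0:ℕ):ℝ)/2 = 1/2 by norm_num), one_mul, one_mul]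
    calc |p.2| = (p.2 ^ 2) ^ ((1:ℝ)/2) := by
          rw [show ((1:ℝ)/2) = 1/(2:ℝ) from rfl, ← Real.sqrt_eq_rpow, Real.sqrt_sq_eq_abs]
      _ ≤ Af V xinv p ^ ((1:ℝ)/2) :=
          Real.rpow_le_rpow (sq_nonneg _) (h.sq_le_Af p) (by norm_num)
  | 1 =>
    have h1 : DL^[1] (fun p : ℝ × ℝ => p.2) p = 1 := by
      rw [Function.iterate_one, DL_snd_eq]
    rw [h1, rpow_exp_congr p (show (1:ℝ)/2 - ((1:ℕ):ℝ)/2 = 0 by norm_num), Real.rpow_zero]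
    norm_num
  | (j + 2) =>
    have h1 : DL^[j + 2] (fun p : ℝ × ℝ => p.2) p = 0 := by
      rw [show j + 2 = (j + 1) + 1 by ring, Function.iterate_succ_apply, DL_snd_eq,
        Function.iterate_succ_apply, DL_const_eq, DLn_zero_fun]
    rw [h1, abs_zero]
    positivity

lemma absX_le_weight (p : ℝ × ℝ) :
    |Xf xinv p| ≤ (1 + (Xf xinv p) ^ 2) ^ ((1:ℝ)/2) := by
  calc |Xf xinv p| = Real.sqrt ((Xf xinv p) ^ 2) := (Real.sqrt_sq_eq_abs _).symm
    _ ≤ Real.sqrt (1 + (Xf xinv p) ^ 2) := Real.sqrt_le_sqrt (by linarith)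
    _ = (1 + (Xf xinv p) ^ 2) ^ ((1:ℝ)/2) := by
        rw [Real.sqrt_eq_rpow]

lemma weight_step (m : ℕ) (p : ℝ × ℝ) :
    (1 + (Xf xinv p) ^ 2) ^ (-((μ + ((m:ℝ) + 1))/2)) * |Xf xinv p|
      ≤ (1 + (Xf xinv p) ^ 2) ^ (-((μ + (m:ℝ))/2)) := by
  have hb : (0:ℝ) < 1 + (Xf xinv p) ^ 2 := by positivity
  calc (1 + (Xf xinv p) ^ 2) ^ (-((μ + ((m:ℝ) + 1))/2)) * |Xf xinv p|
      ≤ (1 + (Xf xinv p) ^ 2) ^ (-((μ + ((m:ℝ) + 1))/2))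
        * (1 + (Xf xinv p) ^ 2) ^ ((1:ℝ)/2) :=
        mul_le_mul_of_nonneg_left (absX_le_weight p) (Real.rpow_nonneg hb.le _)
    _ = (1 + (Xf xinv p) ^ 2) ^ (-((μ + (m:ℝ))/2)) := by
        rw [← Real.rpow_add hb]
        congr 1
        ring

lemma upTo_W (h : Hyp V μ c C0) (hX : HypX V xinv) :
    ∀ k : ℕ, ∀ CX : ℝ, 0 ≤ CX → UpTo V xinv k (Xf xinv) (fun p => |Xf xinv p|) 0 CX →
    ∀ m : ℕ, ∃ CW, 0 ≤ CW ∧ UpTo V xinv k (Wm V xinv m)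
      (fun p => (1 + (Xf xinv p) ^ 2) ^ (-((μ + (m:ℝ))/2))) 0 CW := by
  intro k
  induction k with
  | zero =>
    intro CX hCX hXb m
    obtain ⟨CV, hCV, hbd⟩ := h.hVd m
    refine ⟨CV, hCV.le, ?_⟩
    intro j hj p hp
    interval_cases j
    show |iteratedDeriv m V (xinv p.1 p.2)|
      ≤ CV * (1 + (Xf xinv p) ^ 2) ^ (-((μ + (m:ℝ))/2)) * Af V xinv p ^ ((0:ℝ) - ((0:ℕ):ℝ)/2)
    rw [rpow_exp_congr p (show (0:ℝ) - ((0:ℕ):ℝ)/2 = 0 by norm_num), Real.rpow_zero, mul_one]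
    exact hbd (xinv p.1 p.2)
  | succ k ih =>
    intro CX hCX hXb m
    obtain ⟨CV, hCV, hbd⟩ := h.hVd m
    obtain ⟨CW1, hCW1, hW1⟩ := ih CX hCX (hXb.mono (by omega)) (m + 1)
    have hXshift : UpTo V xinv k (DL (Xf xinv)) (fun p => |Xf xinv p|) (0 - 1/2) CX :=
      UpTo_shift hXb
    have hprod := UpTo.mul h (smooth_W h hX (m + 1)) (hX.smooth.dl)
      (fun p _ => Real.rpow_nonneg (by positivity) _) (fun p _ => abs_nonneg _)
      hCW1 hCX hW1 hXshift
    refine ⟨CV + 2 ^ k * CW1 * CX, by positivity, ?_⟩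
    intro j hj p hp
    have hA := h.Af_pos (xinv := xinv) p
    have hwpos : (0:ℝ) ≤ (1 + (Xf xinv p) ^ 2) ^ (-((μ + (m:ℝ))/2)) :=
      Real.rpow_nonneg (by positivity) _
    match j with
    | 0 =>
      show |iteratedDeriv m V (xinv p.1 p.2)|
        ≤ (CV + 2 ^ k * CW1 * CX) * (1 + (Xf xinv p) ^ 2) ^ (-((μ + (m:ℝ))/2))
          * Af V xinv p ^ ((0:ℝ) - ((0:ℕ):ℝ)/2)
      rw [rpow_exp_congr p (show (0:ℝ) - ((0:ℕ):ℝ)/2 = 0 by norm_num), Real.rpow_zero, mul_one]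
      calc |iteratedDeriv m V (xinv p.1 p.2)|
          ≤ CV * (1 + (Xf xinv p) ^ 2) ^ (-((μ + (m:ℝ))/2)) := hbd (xinv p.1 p.2)
        _ ≤ (CV + 2 ^ k * CW1 * CX) * (1 + (Xf xinv p) ^ 2) ^ (-((μ + (m:ℝ))/2)) := by
            apply mul_le_mul_of_nonneg_right _ hwpos
            have h9 : (0:ℝ) ≤ 2 ^ k * CW1 * CX := by positivity
            linarith
    | (j' + 1) =>
      have hj' : j' ≤ k := by omega
      have e1 : DL^[j' + 1] (Wm V xinv m) p = DL^[j'] (DL (Wm V xinv m)) p := by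
        rw [Function.iterate_succ_apply]
      have e2 : DL^[j'] (DL (Wm V xinv m)) p
          = DL^[j'] (fun q => Wm V xinv (m + 1) q * DL (Xf xinv) q) p :=
        DLn_congr (DL_W h hX m) j' p hp
      rw [e1, e2]
      have h3 := hprod j' hj' p hp
      simp only at h3
      have hexp : (0 + ((0:ℝ) - 1/2)) - (j':ℝ)/2 = (0:ℝ) - ((j':ℝ) + 1)/2 := by ring
      have hcast : -((μ + (((m + 1 : ℕ)):ℝ))/2) = -((μ + ((m:ℝ) + 1))/2) := by push_cast; ring
      rw [hcast, rpow_exp_congr p hexp] at h3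
      calc |DL^[j'] (fun q => Wm V xinv (m + 1) q * DL (Xf xinv) q) p|
          ≤ 2 ^ k * CW1 * CX
            * ((1 + (Xf xinv p) ^ 2) ^ (-((μ + ((m:ℝ) + 1))/2)) * |Xf xinv p|)
            * Af V xinv p ^ ((0:ℝ) - ((j':ℝ) + 1)/2) := h3
        _ ≤ 2 ^ k * CW1 * CX * (1 + (Xf xinv p) ^ 2) ^ (-((μ + (m:ℝ))/2))
            * Af V xinv p ^ ((0:ℝ) - ((j':ℝ) + 1)/2) := by
            apply mul_le_mul_of_nonneg_right _ (Real.rpow_nonneg hA.le _)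
            apply mul_le_mul_of_nonneg_left (weight_step m p) (by positivity)
        _ ≤ (CV + 2 ^ k * CW1 * CX) * (1 + (Xf xinv p) ^ 2) ^ (-((μ + (m:ℝ))/2))
            * Af V xinv p ^ ((0:ℝ) - ((j':ℝ) + 1)/2) := by
            apply mul_le_mul_of_nonneg_right _ (Real.rpow_nonneg hA.le _)
            apply mul_le_mul_of_nonneg_right _ hwpos
            linarith
        _ = (CV + 2 ^ k * CW1 * CX) * (1 + (Xf xinv p) ^ 2) ^ (-((μ + (m:ℝ))/2))
            * Af V xinv p ^ ((0:ℝ) - (((j' + 1 : ℕ)):ℝ)/2) := by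
            have hlast : ((0:ℝ) - ((j':ℝ) + 1)/2) = ((0:ℝ) - (((j' + 1 : ℕ)):ℝ)/2) := by
              push_cast; ring
            rw [rpow_exp_congr p hlast]

lemma rpow_congr {x a b : ℝ} (hab : a = b) : x ^ a = x ^ b := by rw [hab]

lemma DLn_sub {F G : ℝ × ℝ → ℝ} (hF : Sm F) (hG : Sm G) (n : ℕ) :
    ∀ p ∈ Om, DL^[n] (fun q => F q - G q) p = DL^[n] F p - DL^[n] G p := by
  induction n with
  | zero => intro p _; rfl
  | succ n ih =>
    intro p hp
    rw [Function.iterate_succ_apply', Function.iterate_succ_apply',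
      Function.iterate_succ_apply']
    rw [DL_congr ih hp]
    have h1 := (slice_hasDerivAt_DL (hF.dln n) hp).sub (slice_hasDerivAt_DL (hG.dln n) hp)
    exact h1.deriv

lemma Af_mul_rpow (h : Hyp V μ c C0) (p : ℝ × ℝ) (j : ℝ) :
    Af V xinv p * Af V xinv p ^ ((0:ℝ) - j/2) = Af V xinv p ^ ((1:ℝ) - j/2) := by
  have hA := h.Af_pos (xinv := xinv) p
  rw [show (1:ℝ) - j/2 = 1 + ((0:ℝ) - j/2) by ring, Real.rpow_add hA, Real.rpow_one]

lemma upTo_A (h : Hyp V μ c C0) (hX : HypX V xinv) {k : ℕ} {CX : ℝ} (hCX : 0 ≤ CX)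
    (hXb : UpTo V xinv k (Xf xinv) (fun p => |Xf xinv p|) 0 CX) :
    ∃ CA, 0 ≤ CA ∧ UpTo V xinv k (Af V xinv) (fun _ => 1) 1 CA := by
  obtain ⟨CW, hCW, hW0⟩ := upTo_W h hX k CX hCX hXb 0
  have hsnd : Sm (fun p : ℝ × ℝ => p.2) := contDiff_snd.contDiffOn
  have hll := UpTo.mul (xinv := xinv) h hsnd hsnd (fun _ _ => zero_le_one)
    (fun _ _ => zero_le_one) zero_le_one zero_le_one
    (upTo_lambda (xinv := xinv) h k) (upTo_lambda (xinv := xinv) h k)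
  have hcinv : (0:ℝ) ≤ c⁻¹ := inv_nonneg.2 h.hc.le
  refine ⟨2 ^ k + CW * c⁻¹, by positivity, ?_⟩
  intro j hj p hp
  have hA := h.Af_pos (xinv := xinv) p
  have hsub : DL^[j] (Af V xinv) p
      = DL^[j] (fun q : ℝ × ℝ => q.2 * q.2) p - DL^[j] (Wm V xinv 0) p := by
    have e : ∀ q ∈ Om, Af V xinv q = (fun q : ℝ × ℝ => q.2 * q.2) q - Wm V xinv 0 q := by
      intro q _
      show q.2 ^ 2 - V (xinv q.1 q.2) = q.2 * q.2 - iteratedDeriv 0 V (xinv q.1 q.2)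
      rw [iteratedDeriv_zero]; ring
    rw [DLn_congr e j p hp]
    exact DLn_sub (hsnd.mul hsnd) (smooth_W h hX 0) j p hp
  have hb1 : |DL^[j] (fun q : ℝ × ℝ => q.2 * q.2) p|
      ≤ 2 ^ k * Af V xinv p ^ ((1:ℝ) - (j:ℝ)/2) := by
    have h1 := hll j hj p hp
    simp only at h1
    calc |DL^[j] (fun q : ℝ × ℝ => q.2 * q.2) p|
        ≤ 2 ^ k * 1 * 1 * (1 * 1) * Af V xinv p ^ ((1:ℝ)/2 + 1/2 - (j:ℝ)/2) := h1
      _ = 2 ^ k * Af V xinv p ^ ((1:ℝ) - (j:ℝ)/2) := by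
          rw [rpow_congr (show (1:ℝ)/2 + 1/2 - (j:ℝ)/2 = (1:ℝ) - (j:ℝ)/2 by ring)]
          ring
  have hb2 : |DL^[j] (Wm V xinv 0) p|
      ≤ CW * c⁻¹ * Af V xinv p ^ ((1:ℝ) - (j:ℝ)/2) := by
    have h2 := hW0 j hj p hp
    simp only at h2
    have hcast : -((μ + ((0:ℕ):ℝ))/2) = -(μ/2) := by norm_num
    rw [rpow_congr hcast] at h2
    calc |DL^[j] (Wm V xinv 0) p|
        ≤ CW * (1 + (Xf xinv p) ^ 2) ^ (-(μ/2)) * Af V xinv p ^ ((0:ℝ) - (j:ℝ)/2) := h2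
      _ ≤ CW * (c⁻¹ * Af V xinv p) * Af V xinv p ^ ((0:ℝ) - (j:ℝ)/2) := by
          apply mul_le_mul_of_nonneg_right _ (Real.rpow_nonneg hA.le _)
          exact mul_le_mul_of_nonneg_left (h.weight_le_Af p) hCW
      _ = CW * c⁻¹ * (Af V xinv p * Af V xinv p ^ ((0:ℝ) - (j:ℝ)/2)) := by ring
      _ = CW * c⁻¹ * Af V xinv p ^ ((1:ℝ) - (j:ℝ)/2) := by rw [Af_mul_rpow h]
  show |DL^[j] (Af V xinv) p| ≤ (2 ^ k + CW * c⁻¹) * 1 * Af V xinv p ^ ((1:ℝ) - (j:ℝ)/2)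
  rw [hsub]
  calc |DL^[j] (fun q : ℝ × ℝ => q.2 * q.2) p - DL^[j] (Wm V xinv 0) p|
      ≤ |DL^[j] (fun q : ℝ × ℝ => q.2 * q.2) p| + |DL^[j] (Wm V xinv 0) p| := abs_sub _ _
    _ ≤ 2 ^ k * Af V xinv p ^ ((1:ℝ) - (j:ℝ)/2)
        + CW * c⁻¹ * Af V xinv p ^ ((1:ℝ) - (j:ℝ)/2) := add_le_add hb1 hb2
    _ = (2 ^ k + CW * c⁻¹) * 1 * Af V xinv p ^ ((1:ℝ) - (j:ℝ)/2) := by ring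

lemma DLn_const_mul (a : ℝ) {F : ℝ × ℝ → ℝ} (hF : Sm F) (n : ℕ) :
    ∀ p ∈ Om, DL^[n] (fun q => a * F q) p = a * DL^[n] F p := by
  induction n with
  | zero => intro p _; rfl
  | succ n ih =>
    intro p hp
    rw [Function.iterate_succ_apply', Function.iterate_succ_apply']
    rw [DL_congr ih hp]
    exact ((slice_hasDerivAt_DL (hF.dln n) hp).const_mul a).deriv

lemma Hf_eq_rpow (h : Hyp V μ c C0) (p : ℝ × ℝ) :
    Hf V xinv p = Af V xinv p ^ (-((1:ℝ)/2)) := by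
  have hA := h.Af_pos (xinv := xinv) p
  rw [Hf, Real.sqrt_eq_rpow, ← Real.rpow_neg hA.le]

lemma upTo_H (h : Hyp V μ c C0) (hX : HypX V xinv) :
    ∀ k : ℕ, ∀ CA : ℝ, 0 ≤ CA → UpTo V xinv k (Af V xinv) (fun _ => 1) 1 CA →
    ∃ CH, 0 ≤ CH ∧ UpTo V xinv k (Hf V xinv) (fun _ => 1) (-(1/2)) CH := by
  intro k
  induction k with
  | zero =>
    intro CA hCA hAb
    refine ⟨1, zero_le_one, ?_⟩
    intro j hj p hp
    interval_cases j
    have hA := h.Af_pos (xinv := xinv) p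
    show |Hf V xinv p| ≤ 1 * 1 * Af V xinv p ^ (-((1:ℝ)/2) - ((0:ℕ):ℝ)/2)
    rw [Hf_eq_rpow h p, abs_of_nonneg (Real.rpow_nonneg hA.le _), one_mul, one_mul]
    rw [rpow_congr (show (-((1:ℝ)/2) - ((0:ℕ):ℝ)/2) = -((1:ℝ)/2) by norm_num)]
  | succ k ih =>
    intro CA hCA hAb
    obtain ⟨CH, hCH, hHb⟩ := ih CA hCA (hAb.mono (by omega))
    have hsmH := smooth_H h hX
    have hsmA := smooth_A h hX
    have hone : ∀ p : ℝ × ℝ, p ∈ Om → (0:ℝ) ≤ 1 := fun _ _ => zero_le_one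
    have hHH := UpTo.mul (xinv := xinv) h hsmH hsmH hone hone hCH hCH hHb hHb
    have hHHH := UpTo.mul (xinv := xinv) h hsmH (hsmH.mul hsmH) hone
      (fun p hp => by positivity) hCH (by positivity) hHb hHH
    have hAshift : UpTo V xinv k (DL (Af V xinv)) (fun _ => 1) (1 - 1/2) CA :=
      UpTo_shift hAb
    have hprod := UpTo.mul (xinv := xinv) h ((hsmH.mul (hsmH.mul hsmH))) hsmA.dl
      (fun p hp => by positivity) hone (by positivity) hCA hHHH hAshift
    set C4 : ℝ := 2 ^ k * (2 ^ k * CH * (2 ^ k * CH * CH)) * CA with hC4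
    have hC4pos : 0 ≤ C4 := by positivity
    refine ⟨1 + (1/2) * C4, by positivity, ?_⟩
    intro j hj p hp
    have hA := h.Af_pos (xinv := xinv) p
    match j with
    | 0 =>
      show |Hf V xinv p| ≤ (1 + (1/2) * C4) * 1 * Af V xinv p ^ (-((1:ℝ)/2) - ((0:ℕ):ℝ)/2)
      rw [Hf_eq_rpow h p, abs_of_nonneg (Real.rpow_nonneg hA.le _)]
      rw [rpow_congr (show (-((1:ℝ)/2) - ((0:ℕ):ℝ)/2) = -((1:ℝ)/2) by norm_num)]
      nlinarith [Real.rpow_nonneg hA.le (-((1:ℝ)/2)), hC4pos,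
        mul_nonneg hC4pos (Real.rpow_nonneg hA.le (-((1:ℝ)/2)))]
    | (j' + 1) =>
      have hj' : j' ≤ k := by omega
      have e1 : DL^[j' + 1] (Hf V xinv) p = DL^[j'] (DL (Hf V xinv)) p := by
        rw [Function.iterate_succ_apply]
      have e2 : DL^[j'] (DL (Hf V xinv)) p
          = DL^[j'] (fun q => (-(1/2) : ℝ)
            * ((fun q' => Hf V xinv q' * (Hf V xinv q' * Hf V xinv q') * DL (Af V xinv) q') q)) p := by
        apply DLn_congr _ j' p hp
        intro q hq
        rw [DL_H h hX q hq]
        ring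
      have e3 : DL^[j'] (fun q => (-(1/2) : ℝ)
            * ((fun q' => Hf V xinv q' * (Hf V xinv q' * Hf V xinv q') * DL (Af V xinv) q') q)) p
          = (-(1/2) : ℝ)
            * DL^[j'] (fun q' => Hf V xinv q' * (Hf V xinv q' * Hf V xinv q') * DL (Af V xinv) q') p :=
        DLn_const_mul _ ((hsmH.mul (hsmH.mul hsmH)).mul hsmA.dl) j' p hp
      rw [e1, e2, e3, abs_mul]
      have h5 := hprod j' hj' p hp
      simp only at h5
      have hexp : (-(1/2) + (-(1/2) + -(1/2)) + ((1:ℝ) - 1/2)) - (j':ℝ)/2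
          = (-1:ℝ) - (j':ℝ)/2 := by ring
      rw [rpow_exp_congr p hexp] at h5
      calc |(-(1/2) : ℝ)| * |DL^[j'] (fun q' => Hf V xinv q' * (Hf V xinv q' * Hf V xinv q')
            * DL (Af V xinv) q') p|
          ≤ (1/2) * (C4 * (1 * (1 * 1) * 1) * Af V xinv p ^ ((-1:ℝ) - (j':ℝ)/2)) := by
            rw [show |(-(1/2) : ℝ)| = (1/2 : ℝ) by norm_num]
            apply mul_le_mul_of_nonneg_left _ (by norm_num)
            exact h5
        _ = (1/2) * C4 * Af V xinv p ^ ((-1:ℝ) - (j':ℝ)/2) := by ring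
        _ ≤ (1 + (1/2) * C4) * Af V xinv p ^ ((-1:ℝ) - (j':ℝ)/2) := by
            apply mul_le_mul_of_nonneg_right _ (Real.rpow_nonneg hA.le _)
            linarith
        _ = (1 + (1/2) * C4) * 1 * Af V xinv p ^ (-((1:ℝ)/2) - (((j' + 1 : ℕ)):ℝ)/2) := by
            rw [rpow_congr (show ((-1:ℝ) - (j':ℝ)/2)
              = (-((1:ℝ)/2) - (((j' + 1 : ℕ)):ℝ)/2) by push_cast; ring)]
            ring

lemma upTo_I (h : Hyp V μ c C0) (hX : HypX V xinv) {k : ℕ} {CH : ℝ} (hCH : 0 ≤ CH)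
    (hHb : UpTo V xinv k (Hf V xinv) (fun _ => 1) (-(1/2)) CH) :
    ∃ CI, 0 ≤ CI ∧ UpTo V xinv k (Iif V xinv) (fun p => |Xf xinv p|) (-(1/2)) CI := by
  have hν : (0:ℝ) < 1 - μ/2 := by have := h.hμ2; linarith
  set c1 := min 1 (c / C0) with hc1
  have hc1pos : 0 < c1 := lt_min one_pos (div_pos h.hc h.hC0)
  have hc1le : c1 ≤ 1 := min_le_left _ _
  set K := 1 + Real.sqrt C0 * (1 - μ/2)⁻¹ * (Real.sqrt c)⁻¹ with hK
  have hKpos : (0:ℝ) ≤ K := by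
    have h1 : (0:ℝ) ≤ Real.sqrt C0 * (1 - μ/2)⁻¹ * (Real.sqrt c)⁻¹ :=
      mul_nonneg (mul_nonneg (Real.sqrt_nonneg _) (inv_nonneg.2 hν.le))
        (inv_nonneg.2 (Real.sqrt_nonneg _))
    rw [hK]
    linarith
  set CQ := (2:ℝ) ^ k * CH * CH with hCQ
  have hCQpos : 0 ≤ CQ := by positivity
  have hone : ∀ p : ℝ × ℝ, p ∈ Om → (0:ℝ) ≤ 1 := fun _ _ => zero_le_one
  have hQ := UpTo.mul (xinv := xinv) h (smooth_H h hX) (smooth_H h hX) hone hone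
    hCH hCH hHb hHb
  have hc1k : (0:ℝ) ≤ c1 ^ ((-1:ℝ) - (k:ℝ)/2) := Real.rpow_nonneg hc1pos.le _
  refine ⟨CQ * c1 ^ ((-1:ℝ) - (k:ℝ)/2) * K,
    mul_nonneg (mul_nonneg hCQpos hc1k) hKpos, ?_⟩
  intro j hj p hp
  obtain ⟨y, l⟩ := p
  have hl : l ≠ 0 := hp
  have hA := h.Af_pos (xinv := xinv) (p := (y, l))
  rw [I_rep h hX j y hl]
  set M := CQ * (c1 * Af V xinv (y, l)) ^ ((-1:ℝ) - (j:ℝ)/2) with hM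
  have hMnonneg : 0 ≤ M :=
    mul_nonneg hCQpos (Real.rpow_nonneg (mul_nonneg hc1pos.le hA.le) _)
  have hbound : ∀ u ∈ Set.uIoc (0:ℝ) y,
      ‖DL^[j] (fun q => Hf V xinv q * Hf V xinv q) (u, l)‖ ≤ M := by
    intro u hu
    have hu' : u ∈ uIcc (0:ℝ) y := Set.uIoc_subset_uIcc hu
    have hul : ((u, l) : ℝ × ℝ) ∈ Om := hl
    have h6 := hQ j hj (u, l) hul
    simp only at h6
    rw [rpow_exp_congr (u, l)
      (show (-(1/2) + -(1/2)) - (j:ℝ)/2 = (-1:ℝ) - (j:ℝ)/2 by ring)] at h6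
    have hcomp := comparison h hX hl hu'
    have hexp_neg : ((-1:ℝ) - (j:ℝ)/2) ≤ 0 := by
      have : (0:ℝ) ≤ (j:ℝ)/2 := by positivity
      linarith
    have h7 : Af V xinv (u, l) ^ ((-1:ℝ) - (j:ℝ)/2)
        ≤ (c1 * Af V xinv (y, l)) ^ ((-1:ℝ) - (j:ℝ)/2) :=
      Real.rpow_le_rpow_of_nonpos (mul_pos hc1pos hA) hcomp hexp_neg
    rw [Real.norm_eq_abs]
    calc |DL^[j] (fun q => Hf V xinv q * Hf V xinv q) (u, l)|
        ≤ CQ * (1 * 1) * Af V xinv (u, l) ^ ((-1:ℝ) - (j:ℝ)/2) := h6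
      _ = CQ * Af V xinv (u, l) ^ ((-1:ℝ) - (j:ℝ)/2) := by ring
      _ ≤ CQ * (c1 * Af V xinv (y, l)) ^ ((-1:ℝ) - (j:ℝ)/2) :=
          mul_le_mul_of_nonneg_left h7 hCQpos
  have hint := intervalIntegral.norm_integral_le_of_norm_le_const hbound
  rw [Real.norm_eq_abs] at hint
  have hy_le := y_le h hX (y := y) hl
  have hXeq : Xf xinv (y, l) = xinv y l := rfl
  calc |∫ u in (0:ℝ)..y, DL^[j] (fun q => Hf V xinv q * Hf V xinv q) (u, l)|
      ≤ M * |y - 0| := hint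
    _ = M * |y| := by rw [sub_zero]
    _ ≤ M * (K * |xinv y l| * Real.sqrt (Af V xinv (y, l))) :=
        mul_le_mul_of_nonneg_left hy_le hMnonneg
    _ = CQ * (c1 ^ ((-1:ℝ) - (j:ℝ)/2) * Af V xinv (y, l) ^ ((-1:ℝ) - (j:ℝ)/2))
        * (K * |xinv y l| * Af V xinv (y, l) ^ ((1:ℝ)/2)) := by
        rw [hM, Real.mul_rpow hc1pos.le hA.le, Real.sqrt_eq_rpow]
    _ = CQ * c1 ^ ((-1:ℝ) - (j:ℝ)/2) * K * |xinv y l|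
        * (Af V xinv (y, l) ^ ((-1:ℝ) - (j:ℝ)/2) * Af V xinv (y, l) ^ ((1:ℝ)/2)) := by
        ring
    _ = CQ * c1 ^ ((-1:ℝ) - (j:ℝ)/2) * K * |xinv y l|
        * Af V xinv (y, l) ^ (-(1/2) - (j:ℝ)/2) := by
        rw [← Real.rpow_add hA]
        rw [rpow_exp_congr (y, l)
          (show ((-1:ℝ) - (j:ℝ)/2) + (1:ℝ)/2 = (-(1/2) - (j:ℝ)/2) by ring)]
    _ ≤ CQ * c1 ^ ((-1:ℝ) - (k:ℝ)/2) * K * |xinv y l|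
        * Af V xinv (y, l) ^ (-(1/2) - (j:ℝ)/2) := by
        have hce : c1 ^ ((-1:ℝ) - (j:ℝ)/2) ≤ c1 ^ ((-1:ℝ) - (k:ℝ)/2) := by
          apply Real.rpow_le_rpow_of_exponent_ge hc1pos hc1le
          have : (j:ℝ) ≤ (k:ℝ) := by exact_mod_cast hj
          linarith
        have hnn : (0:ℝ) ≤ K * |xinv y l|
            * Af V xinv (y, l) ^ (-(1/2) - (j:ℝ)/2) :=
          mul_nonneg (mul_nonneg hKpos (abs_nonneg _)) (Real.rpow_nonneg hA.le _)
        calc CQ * c1 ^ ((-1:ℝ) - (j:ℝ)/2) * K * |xinv y l|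
              * Af V xinv (y, l) ^ (-(1/2) - (j:ℝ)/2)
            = CQ * c1 ^ ((-1:ℝ) - (j:ℝ)/2)
              * (K * |xinv y l| * Af V xinv (y, l) ^ (-(1/2) - (j:ℝ)/2)) := by ring
          _ ≤ CQ * c1 ^ ((-1:ℝ) - (k:ℝ)/2)
              * (K * |xinv y l| * Af V xinv (y, l) ^ (-(1/2) - (j:ℝ)/2)) := by
              apply mul_le_mul_of_nonneg_right _ hnn
              exact mul_le_mul_of_nonneg_left hce hCQpos
          _ = CQ * c1 ^ ((-1:ℝ) - (k:ℝ)/2) * K * |xinv y l|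
              * Af V xinv (y, l) ^ (-(1/2) - (j:ℝ)/2) := by ring
    _ = CQ * c1 ^ ((-1:ℝ) - (k:ℝ)/2) * K * |Xf xinv (y, l)|
        * Af V xinv (y, l) ^ (-(1/2) - (j:ℝ)/2) := by rw [hXeq]

lemma main_est (h : Hyp V μ c C0) (hX : HypX V xinv) :
    ∀ k : ℕ, ∃ CX, 0 ≤ CX ∧ UpTo V xinv k (Xf xinv) (fun p => |Xf xinv p|) 0 CX := by
  intro k
  induction k with
  | zero =>
    refine ⟨1, zero_le_one, ?_⟩
    intro j hj p hp
    interval_cases j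
    have hA := h.Af_pos (xinv := xinv) p
    show |Xf xinv p| ≤ 1 * |Xf xinv p| * Af V xinv p ^ ((0:ℝ) - ((0:ℕ):ℝ)/2)
    rw [rpow_exp_congr p (show (0:ℝ) - ((0:ℕ):ℝ)/2 = 0 by norm_num), Real.rpow_zero]
    simp
  | succ k ih =>
    obtain ⟨CX, hCX, hXb⟩ := ih
    obtain ⟨CA, hCA, hAb⟩ := upTo_A h hX hCX hXb
    obtain ⟨CH, hCH, hHb⟩ := upTo_H h hX k CA hCA hAb
    obtain ⟨CI, hCI, hIb⟩ := upTo_I h hX hCH hHb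
    have hsmH := smooth_H h hX
    have hsmI := smooth_I h hX
    have hsnd : Sm (fun p : ℝ × ℝ => p.2) := contDiff_snd.contDiffOn
    have hone : ∀ p : ℝ × ℝ, p ∈ Om → (0:ℝ) ≤ 1 := fun _ _ => zero_le_one
    have hHI := UpTo.mul (xinv := xinv) h hsmH hsmI hone (fun p _ => abs_nonneg _)
      hCH hCI hHb hIb
    have hLHI := UpTo.mul (xinv := xinv) h hsnd (hsmH.mul hsmI) hone
      (fun p _ => by positivity) zero_le_one (by positivity)
      (upTo_lambda (xinv := xinv) h k) hHI
    set C5 : ℝ := 2 ^ k * 1 * (2 ^ k * CH * CI) with hC5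
    have hC5pos : 0 ≤ C5 := by positivity
    refine ⟨1 + C5, by positivity, ?_⟩
    intro j hj p hp
    have hA := h.Af_pos (xinv := xinv) p
    match j with
    | 0 =>
      show |Xf xinv p| ≤ (1 + C5) * |Xf xinv p| * Af V xinv p ^ ((0:ℝ) - ((0:ℕ):ℝ)/2)
      rw [rpow_exp_congr p (show (0:ℝ) - ((0:ℕ):ℝ)/2 = 0 by norm_num), Real.rpow_zero]
      nlinarith [abs_nonneg (Xf xinv p), mul_nonneg hC5pos (abs_nonneg (Xf xinv p))]
    | (j' + 1) =>
      have hj' : j' ≤ k := by omega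
      have e1 : DL^[j' + 1] (Xf xinv) p = DL^[j'] (DL (Xf xinv)) p := by
        rw [Function.iterate_succ_apply]
      have e2 : DL^[j'] (DL (Xf xinv)) p
          = DL^[j'] (fun q => -((fun q' => q'.2 * (Hf V xinv q' * Iif V xinv q')) q)) p := by
        apply DLn_congr _ j' p hp
        intro q hq
        rw [DL_X h hX q hq]
        ring
      have e3 := DLn_neg (F := fun q' => q'.2 * (Hf V xinv q' * Iif V xinv q')) j' p hp
      rw [e1, e2, e3, abs_neg]
      have h5 := hLHI j' hj' p hp
      simp only at h5
      rw [rpow_exp_congr p (show ((1:ℝ)/2 + (-(1/2) + -(1/2))) - (j':ℝ)/2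
        = (0:ℝ) - ((j':ℝ) + 1)/2 by ring)] at h5
      calc |DL^[j'] (fun q' => q'.2 * (Hf V xinv q' * Iif V xinv q')) p|
          ≤ C5 * (1 * (1 * |Xf xinv p|)) * Af V xinv p ^ ((0:ℝ) - ((j':ℝ) + 1)/2) := h5
        _ = C5 * |Xf xinv p| * Af V xinv p ^ ((0:ℝ) - ((j':ℝ) + 1)/2) := by ring
        _ ≤ (1 + C5) * |Xf xinv p| * Af V xinv p ^ ((0:ℝ) - ((j':ℝ) + 1)/2) := by
            apply mul_le_mul_of_nonneg_right _ (Real.rpow_nonneg hA.le _)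
            apply mul_le_mul_of_nonneg_right _ (abs_nonneg _)
            linarith
        _ = (1 + C5) * |Xf xinv p| * Af V xinv p ^ ((0:ℝ) - (((j' + 1 : ℕ)):ℝ)/2) := by
            rw [rpow_exp_congr p (show ((0:ℝ) - ((j':ℝ) + 1)/2)
              = ((0:ℝ) - (((j' + 1 : ℕ)):ℝ)/2) by push_cast; ring)]

end LiouvilleAux

open LiouvilleAux

/-- Symbolic estimates for the inverse Liouville transform:
`|∂_λ^α x(y,λ)| ≲ (λ² - V(x(y,λ)))^{-α/2} |x(y,λ)| ≤ |λ|^{-α} |x(y,λ)|`. -/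
theorem inverse_liouville_symbolic_estimates
    (V : ℝ → ℝ) (μ : ℝ) (hμ : μ ∈ Ioo (0:ℝ) 2)
    (hV : ContDiff ℝ (⊤ : ℕ∞) V)
    (hVd : ∀ α : ℕ, ∃ C > (0:ℝ), ∀ x : ℝ,
      |iteratedDeriv α V x| ≤ C * (1 + x^2) ^ (-((μ + α)/2)))
    (hlow : ∃ c > (0:ℝ), ∀ x : ℝ, c * (1 + x^2) ^ (-(μ/2)) ≤ -V x)
    (xinv : ℝ → ℝ → ℝ)
    (hxinv_smooth : ContDiffOn ℝ (⊤ : ℕ∞) (fun p : ℝ × ℝ => xinv p.1 p.2) {p : ℝ × ℝ | p.2 ≠ 0})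
    (hinv_left : ∀ l : ℝ, l ≠ 0 → ∀ x : ℝ,
      xinv (∫ s in (0:ℝ)..x, Real.sqrt (l^2 - V s)) l = x)
    (hinv_right : ∀ l : ℝ, l ≠ 0 → ∀ y : ℝ,
      (∫ s in (0:ℝ)..(xinv y l), Real.sqrt (l^2 - V s)) = y) :
    ∀ α : ℕ, ∃ C > (0:ℝ), ∀ (y l : ℝ), l ≠ 0 →
      |iteratedDeriv α (fun t => xinv y t) l| ≤ C * |l| ^ (-(α:ℝ)) * |xinv y l| ∧
      |iteratedDeriv α (fun t => xinv y t) l|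
        ≤ C * (l^2 - V (xinv y l)) ^ (-(α:ℝ)/2) * |xinv y l| := by
  intro α
  obtain ⟨c, hc, hlow'⟩ := hlow
  obtain ⟨C0, hC0, hup0⟩ := hVd 0
  have hup : ∀ x : ℝ, |V x| ≤ C0 * (1 + x ^ 2) ^ (-(μ/2)) := by
    intro x
    have h1 := hup0 x
    rw [iteratedDeriv_zero] at h1
    rw [rpow_congr (show -(μ/2) = -((μ + ((0:ℕ):ℝ))/2) by norm_num)]
    exact h1
  have h : Hyp V μ c C0 := ⟨hμ.1, hμ.2, hV, hc, hlow', hC0, hup, hVd⟩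
  have hX : HypX V xinv := ⟨hxinv_smooth, hinv_left, hinv_right⟩
  obtain ⟨CX, hCX, hmain⟩ := main_est h hX α
  refine ⟨CX + 1, by linarith, ?_⟩
  intro y l hl
  have hp : ((y, l) : ℝ × ℝ) ∈ Om := hl
  have hb := hmain α le_rfl (y, l) hp
  have heq : iteratedDeriv α (fun t => xinv y t) l
      = DL^[α] (Xf xinv) (y, l) :=
    iteratedDeriv_slice (f := Xf xinv) α y l hl
  have hA := h.Af_pos (xinv := xinv) (p := (y, l))
  have hexp0 : ((0:ℝ) - (α:ℝ)/2) = (-(α:ℝ)/2) := by ring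
  have hsecond : |iteratedDeriv α (fun t => xinv y t) l|
      ≤ (CX + 1) * (l ^ 2 - V (xinv y l)) ^ (-(α:ℝ)/2) * |xinv y l| := by
    rw [heq]
    show |DL^[α] (Xf xinv) (y, l)|
      ≤ (CX + 1) * Af V xinv (y, l) ^ (-(α:ℝ)/2) * |Xf xinv (y, l)|
    calc |DL^[α] (Xf xinv) (y, l)|
        ≤ CX * |Xf xinv (y, l)| * Af V xinv (y, l) ^ ((0:ℝ) - (α:ℝ)/2) := hb
      _ = CX * Af V xinv (y, l) ^ (-(α:ℝ)/2) * |Xf xinv (y, l)| := by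
          rw [rpow_exp_congr (y, l) hexp0]
          ring
      _ ≤ (CX + 1) * Af V xinv (y, l) ^ (-(α:ℝ)/2) * |Xf xinv (y, l)| := by
          apply mul_le_mul_of_nonneg_right _ (abs_nonneg _)
          apply mul_le_mul_of_nonneg_right _ (Real.rpow_nonneg hA.le _)
          linarith
  have hl2 : (0:ℝ) < l ^ 2 := by positivity
  have hkey : (l ^ 2 : ℝ) ^ (-(α:ℝ)/2) = |l| ^ (-(α:ℝ)) := by
    rw [← sq_abs l, ← Real.rpow_natCast |l| 2, ← Real.rpow_mul (abs_nonneg l)]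
    congr 1
    push_cast
    ring
  have hcomp : Af V xinv (y, l) ^ (-(α:ℝ)/2) ≤ |l| ^ (-(α:ℝ)) := by
    rw [← hkey]
    apply Real.rpow_le_rpow_of_nonpos hl2 (h.sq_le_Af (p := (y, l)))
    have : (0:ℝ) ≤ (α:ℝ)/2 := by positivity
    linarith
  have hfirst : |iteratedDeriv α (fun t => xinv y t) l|
      ≤ (CX + 1) * |l| ^ (-(α:ℝ)) * |xinv y l| := by
    have h2 : |iteratedDeriv α (fun t => xinv y t) l|
        ≤ (CX + 1) * Af V xinv (y, l) ^ (-(α:ℝ)/2) * |Xf xinv (y, l)| := hsecond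
    calc |iteratedDeriv α (fun t => xinv y t) l|
        ≤ (CX + 1) * Af V xinv (y, l) ^ (-(α:ℝ)/2) * |Xf xinv (y, l)| := h2
      _ ≤ (CX + 1) * |l| ^ (-(α:ℝ)) * |Xf xinv (y, l)| := by
          apply mul_le_mul_of_nonneg_right _ (abs_nonneg _)
          exact mul_le_mul_of_nonneg_left hcomp (by linarith)
  exact ⟨hfirst, hsecond⟩
end

section
/- Let V < 0 be continuous with C₂⟨x⟩^{-μ} ≤ −V(x) ≤ C₁⟨x⟩^{-μ} for some 0 < μ < 2. Define M₁ = ∫_{x'}^x |V(s)|^{-1/2} ds and M₂ = ∫_{x'}^x |V(s)|^{-3/2} ds. Then there exists c₁ > 1 (depending only on C₁, C₂, μ) such that c₁^{-1}⟨x⟩^{μ/2}|x−x'| ≤ M₁ ≤ c₁⟨x⟩^{μ/2}|x−x'| and c₁^{-1}⟨x⟩^{3μ/2}|x−x'| ≤ M₂ ≤ c₁⟨x⟩^{3μ/2}|x−x'| whenever x ≥ x' and |x| ≥ |x'|. -/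
/-!
The two-sided bound on `V` makes `|V s| ^ (-q/2)` comparable to the weight `⟨s⟩ ^ (qμ/2)`,
so it suffices to integrate the weight over `[x', x]`. Since `|x'| ≤ |x|`, the weight is at most
its value at `x` there; conversely, for `x ≥ 0` the interval `[max x' (x/2), x]` still carries a
quarter of the length of `[x', x]`, and on it `⟨s⟩ ≥ ⟨x⟩ / 2`.
-/

open Set intervalIntegral

lemma continuous_one_add_sq_rpow (p : ℝ) : Continuous fun s : ℝ => (1 + s ^ 2) ^ p :=
  .rpow_const (by fun_prop) fun _ => Or.inl (by positivity)

lemma one_add_sq_rpow_le_of_abs_le {p s x : ℝ} (hp : 0 ≤ p) (h : |s| ≤ |x|) :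
    (1 + s ^ 2) ^ p ≤ (1 + x ^ 2) ^ p :=
  Real.rpow_le_rpow (by positivity) (by linarith [sq_le_sq.2 h]) hp

lemma one_add_sq_rpow_le_four_rpow_mul {p s x : ℝ} (hp : 0 ≤ p) (h : |x| ≤ 2 * |s|) :
    (1 + x ^ 2) ^ p ≤ 4 ^ p * (1 + s ^ 2) ^ p := by
  have hsq : x ^ 2 ≤ (2 * s) ^ 2 := sq_le_sq.2 (by rwa [abs_mul, abs_two])
  rw [← Real.mul_rpow (by norm_num) (by positivity)]
  exact Real.rpow_le_rpow (by positivity) (by nlinarith) hp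

lemma integral_one_add_sq_rpow_le {p x x' : ℝ} (hp : 0 ≤ p) (hx : x' ≤ x) (habs : |x'| ≤ |x|) :
    ∫ s in x'..x, (1 + s ^ 2) ^ p ≤ (1 + x ^ 2) ^ p * (x - x') :=
  calc ∫ s in x'..x, (1 + s ^ 2) ^ p ≤ ∫ _ in x'..x, (1 + x ^ 2) ^ p :=
        integral_mono_on hx ((continuous_one_add_sq_rpow p).intervalIntegrable _ _)
          intervalIntegrable_const fun s hs => one_add_sq_rpow_le_of_abs_le hp
            ((abs_le_max_abs_abs hs.1 hs.2).trans (max_eq_right habs).le)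
    _ = (1 + x ^ 2) ^ p * (x - x') := by rw [integral_const, smul_eq_mul, mul_comm]

lemma le_integral_one_add_sq_rpow {p x x' : ℝ} (hp : 0 ≤ p) (hx : x' ≤ x) (habs : |x'| ≤ |x|) :
    (4 * 4 ^ p)⁻¹ * ((1 + x ^ 2) ^ p * (x - x')) ≤ ∫ s in x'..x, (1 + s ^ 2) ^ p := by
  rcases lt_or_ge x 0 with hx0 | hx0
  · obtain rfl : x' = x := le_antisymm hx <| by
      rw [abs_of_neg hx0, abs_of_neg (hx.trans_lt hx0)] at habs; linarith
    simp
  obtain ⟨m, hx'm, hxm, hmx, hlen⟩ :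
      ∃ m, x' ≤ m ∧ x / 2 ≤ m ∧ m ≤ x ∧ x - x' ≤ 4 * (x - m) := by
    rw [abs_of_nonneg hx0] at habs
    refine ⟨max x' (x / 2), le_max_left _ _, le_max_right _ _, max_le hx (by linarith), ?_⟩
    rcases max_cases x' (x / 2) with ⟨h, -⟩ | ⟨h, -⟩ <;> rw [h] <;> linarith [neg_abs_le x']
  have hpt : ∀ s ∈ Icc m x, (4 ^ p)⁻¹ * (1 + x ^ 2) ^ p ≤ (1 + s ^ 2) ^ p := fun s hs => by
    rw [inv_mul_le_iff₀ (by positivity)]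
    refine one_add_sq_rpow_le_four_rpow_mul hp ?_
    rw [abs_of_nonneg hx0, abs_of_nonneg (by linarith [hs.1])]
    linarith [hs.1]
  calc (4 * 4 ^ p)⁻¹ * ((1 + x ^ 2) ^ p * (x - x'))
      = (x - x') / 4 * ((4 ^ p)⁻¹ * (1 + x ^ 2) ^ p) := by ring
    _ ≤ (x - m) * ((4 ^ p)⁻¹ * (1 + x ^ 2) ^ p) := by gcongr; linarith
    _ = ∫ _ in m..x, (4 ^ p)⁻¹ * (1 + x ^ 2) ^ p := by rw [integral_const, smul_eq_mul]
    _ ≤ ∫ s in m..x, (1 + s ^ 2) ^ p :=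
        integral_mono_on hmx intervalIntegrable_const
          ((continuous_one_add_sq_rpow p).intervalIntegrable _ _) hpt
    _ ≤ ∫ s in x'..x, (1 + s ^ 2) ^ p :=
        integral_mono_interval hx'm hmx le_rfl (Filter.Eventually.of_forall fun _ => by positivity)
          ((continuous_one_add_sq_rpow p).intervalIntegrable _ _)

lemma mul_one_add_sq_rpow_rpow {C : ℝ} (hC : 0 ≤ C) (μ q s : ℝ) :
    (C * (1 + s ^ 2) ^ (-(μ / 2))) ^ (-q / 2) = C ^ (-(q / 2)) * (1 + s ^ 2) ^ (q * μ / 4) := by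
  rw [Real.mul_rpow hC (by positivity), ← Real.rpow_mul (by positivity)]
  ring_nf

lemma abs_rpow_neg_half_mem_Icc {μ C₁ C₂ q s v : ℝ} (hC₂ : 0 < C₂) (hq : 0 ≤ q)
    (hv : C₂ * (1 + s ^ 2) ^ (-(μ / 2)) ≤ -v ∧ -v ≤ C₁ * (1 + s ^ 2) ^ (-(μ / 2))) :
    |v| ^ (-q / 2) ∈ Icc (C₁ ^ (-(q / 2)) * (1 + s ^ 2) ^ (q * μ / 4))
      (C₂ ^ (-(q / 2)) * (1 + s ^ 2) ^ (q * μ / 4)) := by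
  have hv₀ : 0 < -v := lt_of_lt_of_le (by positivity) hv.1
  have hC₁ : 0 ≤ C₁ := nonneg_of_mul_nonneg_left (hv₀.le.trans hv.2) (by positivity)
  rw [abs_of_neg (neg_pos.1 hv₀), ← mul_one_add_sq_rpow_rpow hC₁, ← mul_one_add_sq_rpow_rpow hC₂.le]
  exact ⟨Real.rpow_le_rpow_of_nonpos hv₀ hv.2 (by linarith),
    Real.rpow_le_rpow_of_nonpos (by positivity) hv.1 (by linarith)⟩

theorem integral_abs_rpow_neg_half_mem_Icc {V : ℝ → ℝ} {μ C₁ C₂ q x x' : ℝ} (hμ : 0 ≤ μ)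
    (hC₁ : 0 < C₁) (hC₂ : 0 < C₂) (hq : 0 ≤ q) (hV : Continuous V)
    (hVb : ∀ s, C₂ * (1 + s ^ 2) ^ (-(μ / 2)) ≤ -V s ∧ -V s ≤ C₁ * (1 + s ^ 2) ^ (-(μ / 2)))
    (hx : x' ≤ x) (habs : |x'| ≤ |x|) :
    ∫ s in x'..x, |V s| ^ (-q / 2) ∈
      Icc ((4 * 4 ^ (q * μ / 4) * C₁ ^ (q / 2))⁻¹ * ((1 + x ^ 2) ^ (q * μ / 4) * (x - x')))
        (C₂ ^ (-(q / 2)) * ((1 + x ^ 2) ^ (q * μ / 4) * (x - x'))) := by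
  have hp : 0 ≤ q * μ / 4 := by positivity
  have hVc : Continuous fun s => |V s| ^ (-q / 2) := hV.abs.rpow_const fun s =>
    Or.inl (lt_of_lt_of_le (by positivity) ((hVb s).1.trans (neg_le_abs _))).ne'
  have hw := continuous_one_add_sq_rpow (q * μ / 4)
  constructor
  · calc (4 * 4 ^ (q * μ / 4) * C₁ ^ (q / 2))⁻¹ * ((1 + x ^ 2) ^ (q * μ / 4) * (x - x'))
        = C₁ ^ (-(q / 2)) *
            ((4 * 4 ^ (q * μ / 4))⁻¹ * ((1 + x ^ 2) ^ (q * μ / 4) * (x - x'))) := by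
          rw [Real.rpow_neg hC₁.le, mul_inv]; ring
      _ ≤ C₁ ^ (-(q / 2)) * ∫ s in x'..x, (1 + s ^ 2) ^ (q * μ / 4) := by
          gcongr; exact le_integral_one_add_sq_rpow hp hx habs
      _ = ∫ s in x'..x, C₁ ^ (-(q / 2)) * (1 + s ^ 2) ^ (q * μ / 4) :=
          (integral_const_mul _ _).symm
      _ ≤ ∫ s in x'..x, |V s| ^ (-q / 2) :=
          integral_mono_on hx ((hw.const_mul _).intervalIntegrable _ _) (hVc.intervalIntegrable _ _)
            fun s _ => (abs_rpow_neg_half_mem_Icc hC₂ hq (hVb s)).1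
  · calc ∫ s in x'..x, |V s| ^ (-q / 2)
        ≤ ∫ s in x'..x, C₂ ^ (-(q / 2)) * (1 + s ^ 2) ^ (q * μ / 4) :=
          integral_mono_on hx (hVc.intervalIntegrable _ _) ((hw.const_mul _).intervalIntegrable _ _)
            fun s _ => (abs_rpow_neg_half_mem_Icc hC₂ hq (hVb s)).2
      _ = C₂ ^ (-(q / 2)) * ∫ s in x'..x, (1 + s ^ 2) ^ (q * μ / 4) := integral_const_mul _ _
      _ ≤ C₂ ^ (-(q / 2)) * ((1 + x ^ 2) ^ (q * μ / 4) * (x - x')) := by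
          gcongr; exact integral_one_add_sq_rpow_le hp hx habs

lemma inv_mul_le_and_le_mul_of_mem_Icc {a b c t I : ℝ} (ha : 0 < a) (hac : a ≤ c) (hbc : b ≤ c)
    (ht : 0 ≤ t) (hI : I ∈ Icc (a⁻¹ * t) (b * t)) : c⁻¹ * t ≤ I ∧ I ≤ c * t :=
  ⟨le_trans (by gcongr) hI.1, hI.2.trans (by gcongr)⟩

/-- Comparison of the moments `M₁ = ∫ |V|^{-1/2}` and `M₂ = ∫ |V|^{-3/2}` with
`⟨x⟩^{μ/2}|x-x'|` and `⟨x⟩^{3μ/2}|x-x'|` respectively, for potentials with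
`C₂⟨x⟩^{-μ} ≤ -V ≤ C₁⟨x⟩^{-μ}`, when `x ≥ x'` and `|x| ≥ |x'|`. -/
theorem moments_comparison (μ C₁ C₂ : ℝ) (hμ : μ ∈ Ioo (0:ℝ) 2)
    (hC₁ : 0 < C₁) (hC₂ : 0 < C₂) :
    ∃ c₁ > (1:ℝ), ∀ V : ℝ → ℝ, Continuous V → (∀ x, V x < 0) →
      (∀ x : ℝ, C₂ * (1 + x^2) ^ (-(μ/2)) ≤ -V x ∧ -V x ≤ C₁ * (1 + x^2) ^ (-(μ/2))) →
      ∀ x x' : ℝ, x' ≤ x → |x'| ≤ |x| →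
        (c₁⁻¹ * (1 + x^2) ^ (μ/4) * |x - x'|
            ≤ ∫ s in x'..x, |V s| ^ (-(1:ℝ)/2)) ∧
        ((∫ s in x'..x, |V s| ^ (-(1:ℝ)/2))
            ≤ c₁ * (1 + x^2) ^ (μ/4) * |x - x'|) ∧
        (c₁⁻¹ * (1 + x^2) ^ (3*μ/4) * |x - x'|
            ≤ ∫ s in x'..x, |V s| ^ (-(3:ℝ)/2)) ∧
        ((∫ s in x'..x, |V s| ^ (-(3:ℝ)/2))
            ≤ c₁ * (1 + x^2) ^ (3*μ/4) * |x - x'|) := by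
  set a : ℝ → ℝ := fun q => 4 * 4 ^ (q * μ / 4) * C₁ ^ (q / 2)
  set b : ℝ → ℝ := fun q => C₂ ^ (-(q / 2))
  have ha (q : ℝ) : 0 < a q := by positivity
  have hb (q : ℝ) : 0 < b q := by positivity
  set c := 1 + a 1 + a 3 + b 1 + b 3 with hc
  refine ⟨c, by linarith [ha 1, ha 3, hb 1, hb 3], fun V hV _ hVb x x' hx habs => ?_⟩
  have ht (q : ℝ) : 0 ≤ (1 + x ^ 2) ^ (q * μ / 4) * (x - x') := by
    have := sub_nonneg.2 hx; positivity
  obtain ⟨hM₁, hM₁'⟩ := inv_mul_le_and_le_mul_of_mem_Icc (b := b 1) (c := c) (ha 1)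
    (by linarith [hc, ha 3, hb 1, hb 3]) (by linarith [hc, ha 1, ha 3, hb 3]) (ht 1)
    (integral_abs_rpow_neg_half_mem_Icc hμ.1.le hC₁ hC₂ zero_le_one hV hVb hx habs)
  obtain ⟨hM₂, hM₂'⟩ := inv_mul_le_and_le_mul_of_mem_Icc (b := b 3) (c := c) (ha 3)
    (by linarith [hc, ha 1, hb 1, hb 3]) (by linarith [hc, ha 1, ha 3, hb 1]) (ht 3)
    (integral_abs_rpow_neg_half_mem_Icc hμ.1.le hC₁ hC₂ zero_le_three hV hVb hx habs)
  rw [abs_of_nonneg (sub_nonneg.2 hx), show μ / 4 = 1 * μ / 4 by ring]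
  simp only [mul_assoc] at hM₁ hM₁' hM₂ hM₂' ⊢
  exact ⟨hM₁, hM₁', hM₂, hM₂'⟩
end

section
/- Let V < 0 be continuous with −V(x) ≥ C⟨x⟩^{-μ}, 0 < μ < 2, and fix R ≥ 1. Then there exists c₂ > 0 such that for all λ with 0 < λ ≤ R⟨x⟩^{-μ/2} and all x ≥ x' with |x| ≥ |x'|: c₂ M₁ ≤ ∫_{x'}^x (λ²−V(s))^{-1/2} ds ≤ M₁, ∫_{x'}^x |V(s)|(λ²−V(s))^{-3/2} ds ≤ M₁, and c₂ M₂ ≤ ∫_{x'}^x |V(s)|(λ²−V(s))^{-5/2} ds ≤ M₂, where M_j = ∫_{x'}^x |V(s)|^{-(2j−1)/2} ds. -/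
open Set intervalIntegral

/-!
Under the energy constraint, `λ² ≤ R²⟨x⟩^{-μ} ≤ R²⟨s⟩^{-μ} ≤ (R²/C) |V(s)|` for every `s`
between `x'` and `x` (this is where `|s| ≤ |x|` enters), so `|V| ≤ λ² - V ≤ K |V|` on `[x', x]`
with `K = 1 + R²/C`. Raising to a negative power reverses these bounds up to the factor `K^p`,
and the comparisons follow by integrating, with `c₂ = K^{-5/2}`.
-/

section Comparison

variable {f g w : ℝ → ℝ} {a b p : ℝ}

lemma intervalIntegrable_mul_rpow (hab : a ≤ b) (hw : ContinuousOn w (Icc a b))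
    (hf : ContinuousOn f (Icc a b)) (hf0 : ∀ s ∈ Icc a b, 0 < f s) :
    IntervalIntegrable (fun s => w s * f s ^ p) MeasureTheory.volume a b :=
  (hw.mul (hf.rpow_const fun s hs => Or.inl (hf0 s hs).ne')).intervalIntegrable_of_Icc hab

lemma integral_mul_rpow_le_of_le (hab : a ≤ b) (hw : ContinuousOn w (Icc a b))
    (hf : ContinuousOn f (Icc a b)) (hg : ContinuousOn g (Icc a b))
    (hw0 : ∀ s ∈ Icc a b, 0 ≤ w s) (hf0 : ∀ s ∈ Icc a b, 0 < f s)
    (hfg : ∀ s ∈ Icc a b, f s ≤ g s) (hp : p ≤ 0) :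
    ∫ s in a..b, w s * g s ^ p ≤ ∫ s in a..b, w s * f s ^ p :=
  integral_mono_on hab
    (intervalIntegrable_mul_rpow hab hw hg fun s hs => (hf0 s hs).trans_le (hfg s hs))
    (intervalIntegrable_mul_rpow hab hw hf hf0) fun s hs =>
      mul_le_mul_of_nonneg_left (Real.rpow_le_rpow_of_nonpos (hf0 s hs) (hfg s hs) hp) (hw0 s hs)

lemma rpow_mul_integral_mul_rpow_le {K : ℝ} (hab : a ≤ b) (hK : 0 < K)
    (hw : ContinuousOn w (Icc a b)) (hf : ContinuousOn f (Icc a b))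
    (hg : ContinuousOn g (Icc a b)) (hw0 : ∀ s ∈ Icc a b, 0 ≤ w s)
    (hf0 : ∀ s ∈ Icc a b, 0 < f s) (hg0 : ∀ s ∈ Icc a b, 0 < g s)
    (hgK : ∀ s ∈ Icc a b, g s ≤ K * f s) (hp : p ≤ 0) :
    K ^ p * ∫ s in a..b, w s * f s ^ p ≤ ∫ s in a..b, w s * g s ^ p := by
  rw [← integral_const_mul]
  refine integral_mono_on hab ((intervalIntegrable_mul_rpow hab hw hf hf0).const_mul _)
    (intervalIntegrable_mul_rpow hab hw hg hg0) fun s hs => ?_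
  have h : (K * f s) ^ p ≤ g s ^ p := Real.rpow_le_rpow_of_nonpos (hg0 s hs) (hgK s hs) hp
  rw [Real.mul_rpow hK.le (hf0 s hs).le] at h
  calc K ^ p * (w s * f s ^ p) = w s * (K ^ p * f s ^ p) := by ring
    _ ≤ w s * g s ^ p := mul_le_mul_of_nonneg_left h (hw0 s hs)

lemma integral_self_mul_rpow {q : ℝ} (hf0 : ∀ s, 0 ≤ f s) (hpq : 1 + p = q) (hq : q ≠ 0) :
    ∫ s in a..b, f s * f s ^ p = ∫ s in a..b, f s ^ q := by
  subst hpq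
  simp only [Real.rpow_one_add' (hf0 _) hq]

end Comparison

lemma one_add_sq_rpow_le_of_abs_le_s13 {q s x : ℝ} (hq : q ≤ 0) (hsx : |s| ≤ |x|) :
    (1 + x ^ 2) ^ q ≤ (1 + s ^ 2) ^ q := by
  refine Real.rpow_le_rpow_of_nonpos (by positivity) ?_ hq
  nlinarith [sq_abs s, sq_abs x, mul_self_le_mul_self (abs_nonneg s) hsx]

lemma sq_le_sq_mul_rpow_of_le_mul_rpow {l R t q : ℝ} (hl : 0 ≤ l) (ht : 0 ≤ t)
    (h : l ≤ R * t ^ q) : l ^ 2 ≤ R ^ 2 * t ^ (2 * q) := by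
  calc l ^ 2 ≤ (R * t ^ q) ^ 2 := pow_le_pow_left₀ hl h 2
    _ = R ^ 2 * t ^ (2 * q) := by
      rw [mul_pow, mul_comm 2 q, ← Real.rpow_mul_natCast ht]; norm_num

lemma sq_sub_le_mul_abs_of_le_japanese_rpow {μ C R x x' s l : ℝ} {V : ℝ → ℝ}
    (hμ : 0 ≤ μ) (hC : 0 < C) (hlow : ∀ x : ℝ, C * (1 + x ^ 2) ^ (-(μ / 2)) ≤ -V x)
    (hneg : V s < 0) (hs : s ∈ Icc x' x) (habs : |x'| ≤ |x|) (hl : 0 ≤ l)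
    (hlR : l ≤ R * (1 + x ^ 2) ^ (-(μ / 4))) :
    l ^ 2 - V s ≤ (1 + R ^ 2 / C) * |V s| := by
  have hsx : |s| ≤ |x| := (abs_le_max_abs_abs hs.1 hs.2).trans (max_eq_right habs).le
  have hexp : 2 * -(μ / 4) = -(μ / 2) := by ring
  have hl2 : l ^ 2 ≤ R ^ 2 / C * -V s := calc
    l ^ 2 ≤ R ^ 2 * (1 + x ^ 2) ^ (-(μ / 2)) := by
        simpa only [hexp] using sq_le_sq_mul_rpow_of_le_mul_rpow hl (by positivity) hlR
    _ ≤ R ^ 2 * (1 + s ^ 2) ^ (-(μ / 2)) :=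
        mul_le_mul_of_nonneg_left (one_add_sq_rpow_le_of_abs_le_s13 (by linarith) hsx) (by positivity)
    _ = R ^ 2 / C * (C * (1 + s ^ 2) ^ (-(μ / 2))) := by field_simp
    _ ≤ R ^ 2 / C * -V s := mul_le_mul_of_nonneg_left (hlow s) (by positivity)
  rw [abs_of_neg hneg]
  linarith

theorem low_energy_moment_comparison_general (μ C R : ℝ) (hμ : μ ∈ Ioo (0:ℝ) 2)
    (hC : 0 < C)
    (V : ℝ → ℝ) (hVc : Continuous V) (hneg : ∀ x, V x < 0)
    (hlow : ∀ x : ℝ, C * (1 + x^2) ^ (-(μ/2)) ≤ -V x) :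
    ∃ c₂ > (0:ℝ), ∀ (x x' l : ℝ), x' ≤ x → |x'| ≤ |x| →
      0 < l → l ≤ R * (1 + x^2) ^ (-(μ/4)) →
      (c₂ * (∫ s in x'..x, |V s| ^ (-(1:ℝ)/2))
          ≤ ∫ s in x'..x, (l^2 - V s) ^ (-(1:ℝ)/2)) ∧
      ((∫ s in x'..x, (l^2 - V s) ^ (-(1:ℝ)/2))
          ≤ ∫ s in x'..x, |V s| ^ (-(1:ℝ)/2)) ∧
      ((∫ s in x'..x, |V s| * (l^2 - V s) ^ (-(3:ℝ)/2))
          ≤ ∫ s in x'..x, |V s| ^ (-(1:ℝ)/2)) ∧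
      (c₂ * (∫ s in x'..x, |V s| ^ (-(3:ℝ)/2))
          ≤ ∫ s in x'..x, |V s| * (l^2 - V s) ^ (-(5:ℝ)/2)) ∧
      ((∫ s in x'..x, |V s| * (l^2 - V s) ^ (-(5:ℝ)/2))
          ≤ ∫ s in x'..x, |V s| ^ (-(3:ℝ)/2)) := by
  set K : ℝ := 1 + R ^ 2 / C
  have hK : 1 ≤ K := le_add_of_nonneg_right (by positivity)
  refine ⟨K ^ (-(5:ℝ)/2), by positivity, fun x x' l hxx' habs hl hlR => ?_⟩
  have hVnn : ∀ s, 0 ≤ |V s| := fun s => abs_nonneg _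
  have hV0 : ∀ s ∈ Icc x' x, 0 < |V s| := fun s _ => abs_pos.mpr (hneg s).ne
  have hL0 : ∀ s ∈ Icc x' x, 0 < l ^ 2 - V s := fun s _ => by nlinarith [hneg s]
  have hVL : ∀ s ∈ Icc x' x, |V s| ≤ l ^ 2 - V s := fun s _ => by
    nlinarith [abs_of_neg (hneg s)]
  have hLV : ∀ s ∈ Icc x' x, l ^ 2 - V s ≤ K * |V s| := fun s hs =>
    sq_sub_le_mul_abs_of_le_japanese_rpow hμ.1.le hC hlow (hneg s) hs habs hl.le hlR
  have cV : ContinuousOn (fun s => |V s|) (Icc x' x) := hVc.abs.continuousOn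
  have cL : ContinuousOn (fun s => l ^ 2 - V s) (Icc x' x) :=
    (continuous_const.sub hVc).continuousOn
  have c1 : ContinuousOn (fun _ => (1:ℝ)) (Icc x' x) := continuousOn_const
  refine ⟨?_, ?_, ?_, ?_, ?_⟩
  · calc K ^ (-(5:ℝ)/2) * ∫ s in x'..x, |V s| ^ (-(1:ℝ)/2)
        ≤ K ^ (-(1:ℝ)/2) * ∫ s in x'..x, |V s| ^ (-(1:ℝ)/2) :=
          mul_le_mul_of_nonneg_right (Real.rpow_le_rpow_of_exponent_le hK (by norm_num))
            (integral_nonneg hxx' fun s _ => Real.rpow_nonneg (hVnn s) _)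
      _ ≤ _ := by
          simpa only [one_mul] using rpow_mul_integral_mul_rpow_le hxx' (by positivity) c1 cV cL
            (fun _ _ => zero_le_one) hV0 hL0 hLV (by norm_num)
  · simpa only [one_mul] using integral_mul_rpow_le_of_le hxx' c1 cV cL
      (fun _ _ => zero_le_one) hV0 hVL (by norm_num)
  · rw [← integral_self_mul_rpow hVnn (p := -(3:ℝ)/2) (by norm_num) (by norm_num)]
    exact integral_mul_rpow_le_of_le hxx' cV cV cL (fun s _ => hVnn s) hV0 hVL (by norm_num)
  · rw [← integral_self_mul_rpow hVnn (p := -(5:ℝ)/2) (by norm_num) (by norm_num)]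
    exact rpow_mul_integral_mul_rpow_le hxx' (by positivity) cV cV cL (fun s _ => hVnn s) hV0 hL0
      hLV (by norm_num)
  · rw [← integral_self_mul_rpow hVnn (p := -(5:ℝ)/2) (by norm_num) (by norm_num)]
    exact integral_mul_rpow_le_of_le hxx' cV cV cL (fun s _ => hVnn s) hV0 hVL (by norm_num)

/-- Low-energy comparison: for `0 < λ ≤ R⟨x⟩^{-μ/2}`, `x ≥ x'`, `|x| ≥ |x'|`, the
integrals `∫ (λ²-V)^{-1/2}`, `∫ |V|(λ²-V)^{-3/2}`, `∫ |V|(λ²-V)^{-5/2}` are comparable to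
the moments `M₁ = ∫|V|^{-1/2}`, `M₂ = ∫|V|^{-3/2}`. -/
theorem low_energy_moment_comparison (μ C R : ℝ) (hμ : μ ∈ Ioo (0:ℝ) 2)
    (hC : 0 < C) (hR : 1 ≤ R)
    (V : ℝ → ℝ) (hVc : Continuous V) (hneg : ∀ x, V x < 0)
    (hlow : ∀ x : ℝ, C * (1 + x^2) ^ (-(μ/2)) ≤ -V x) :
    ∃ c₂ > (0:ℝ), ∀ (x x' l : ℝ), x' ≤ x → |x'| ≤ |x| →
      0 < l → l ≤ R * (1 + x^2) ^ (-(μ/4)) →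
      (c₂ * (∫ s in x'..x, |V s| ^ (-(1:ℝ)/2))
          ≤ ∫ s in x'..x, (l^2 - V s) ^ (-(1:ℝ)/2)) ∧
      ((∫ s in x'..x, (l^2 - V s) ^ (-(1:ℝ)/2))
          ≤ ∫ s in x'..x, |V s| ^ (-(1:ℝ)/2)) ∧
      ((∫ s in x'..x, |V s| * (l^2 - V s) ^ (-(3:ℝ)/2))
          ≤ ∫ s in x'..x, |V s| ^ (-(1:ℝ)/2)) ∧
      (c₂ * (∫ s in x'..x, |V s| ^ (-(3:ℝ)/2))
          ≤ ∫ s in x'..x, |V s| * (l^2 - V s) ^ (-(5:ℝ)/2)) ∧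
      ((∫ s in x'..x, |V s| * (l^2 - V s) ^ (-(5:ℝ)/2))
          ≤ ∫ s in x'..x, |V s| ^ (-(3:ℝ)/2)) :=
  low_energy_moment_comparison_general μ C R hμ hC V hVc hneg hlow
end
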